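/- arXiv:1812.06047 — 5 statements merged into one kernel-verified Lean document; each statement's English description precedes it below -/
import Mathlib

section
/- For every μ ∈ ℂ, the map v ↦ Γ v̄ is a conjugate-linear bijection from the eigenspace of D for the eigenvalue μ onto the eigenspace of D for the eigenvalue −μ̄; in particular, these two eigenspaces have the same dimension over ℂ. -/
/-!
Conjugating by `Γ` and taking entrywise complex conjugates is multiplicative because `Γ² = 1`,
so it sends `R⁻¹` to `(-R)⁻¹` and hence `D = R⁻¹ Ω` to `-D`. At the level of vectors this says
that the conjugate-linear involution `J v = Γ v̄` anticommutes with `D`, and any such involution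
carries the `μ`-eigenspace of `D` onto its `(-μ̄)`-eigenspace. A conjugate-linear bijection
preserves dimension since conjugation is a ring automorphism of `ℂ`.
-/

open Matrix

theorem LinearEquiv.finrank_eq_of_semilinear {R M M₁ : Type*} [Ring R] [AddCommGroup M]
    [AddCommGroup M₁] [Module R M] [Module R M₁] {σ σ' : R →+* R}
    [RingHomInvPair σ σ'] [RingHomInvPair σ' σ] (e : M ≃ₛₗ[σ] M₁) :
    Module.finrank R M = Module.finrank R M₁ := by
  have hσ : Function.Bijective σ :=
    Function.bijective_iff_has_inverse.mpr ⟨σ', fun r => by simp, fun r => by simp⟩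
  simpa [Module.finrank] using
    congrArg Cardinal.toNat (lift_rank_eq_of_equiv_equiv σ e.toAddEquiv hσ e.map_smulₛₗ)

namespace Module.End

variable {K V : Type*} [CommRing K] [StarRing K] [AddCommGroup V] [Module K V]
  {f : Module.End K V}

theorem apply_mem_eigenspace_neg_star_of_anticomm {J : V →ₛₗ[starRingEnd K] V}
    (hfJ : ∀ v, f (J v) = -J (f v)) {μ : K} {v : V} (hv : v ∈ f.eigenspace μ) :
    J v ∈ f.eigenspace (-star μ) := by
  rw [mem_eigenspace_iff] at hv ⊢
  rw [hfJ, hv, J.map_smulₛₗ, neg_smul]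
  rfl

theorem map_eigenspace_of_anticomm (J : V ≃ₛₗ[starRingEnd K] V)
    (hfJ : ∀ v, f (J v) = -J (f v)) (μ : K) :
    (f.eigenspace μ).map (J : V →ₛₗ[starRingEnd K] V) = f.eigenspace (-star μ) := by
  have hfJsymm (w : V) : f (J.symm w) = -J.symm (f w) := by
    have h := congrArg J.symm (hfJ (J.symm w))
    rw [J.apply_symm_apply, map_neg, J.symm_apply_apply] at h
    rw [h, neg_neg]
  refine le_antisymm ?_ fun w hw => ⟨J.symm w, ?_, J.apply_symm_apply w⟩
  · rintro _ ⟨v, hv, rfl⟩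
    exact apply_mem_eigenspace_neg_star_of_anticomm hfJ hv
  · simpa using apply_mem_eigenspace_neg_star_of_anticomm (J := J.symm.toLinearMap) hfJsymm hw

end Module.End

namespace Matrix

variable {n K : Type*} [Fintype n] [CommRing K] [StarRing K]

theorem star_mulVec_eq_map_mulVec (A : Matrix n n K) (v : n → K) :
    star (A *ᵥ v) = A.map (starRingEnd K) *ᵥ star v := by
  rw [star_mulVec, conjTranspose, transpose_map, vecMul_transpose]
  rfl

def conjMulVec (Γ : Matrix n n K) : (n → K) →ₛₗ[starRingEnd K] (n → K) :=
  Γ.mulVecLin ∘ₛₗ (starLinearEquiv K).toLinearMap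

theorem conjMulVec_apply (Γ : Matrix n n K) (v : n → K) : conjMulVec Γ v = Γ *ᵥ star v := rfl

variable [DecidableEq n] {Γ : Matrix n n K}

theorem conjMulVec_involutive (hΓ : Γ * Γ = 1) (hΓreal : Γ.map (starRingEnd K) = Γ) :
    Function.Involutive (conjMulVec Γ) := fun v => by
  rw [conjMulVec_apply, conjMulVec_apply, star_mulVec_eq_map_mulVec, hΓreal, star_star,
    mulVec_mulVec, hΓ, one_mulVec]

theorem conj_map_mul (hΓ : Γ * Γ = 1) (A B : Matrix n n K) :
    Γ * (A * B).map (starRingEnd K) * Γ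
      = (Γ * A.map (starRingEnd K) * Γ) * (Γ * B.map (starRingEnd K) * Γ) := by
  calc Γ * (A * B).map (starRingEnd K) * Γ
      = Γ * A.map (starRingEnd K) * 1 * B.map (starRingEnd K) * Γ := by
        rw [Matrix.map_mul]; noncomm_ring
    _ = _ := by rw [← hΓ]; noncomm_ring

theorem conj_map_inv_eq_neg (hΓ : Γ * Γ = 1) {A : Matrix n n K} (hA : IsUnit A.det)
    (h : Γ * A.map (starRingEnd K) * Γ = -A) :
    Γ * A⁻¹.map (starRingEnd K) * Γ = -A⁻¹ := by
  set X := Γ * A⁻¹.map (starRingEnd K) * Γ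
  have hX : X * -A = 1 := by
    rw [← h, ← conj_map_mul hΓ, nonsing_inv_mul A hA]
    simp [hΓ]
  calc X = X * (-A * -A⁻¹) := by rw [neg_mul_neg, mul_nonsing_inv A hA, mul_one]
    _ = -A⁻¹ := by rw [← mul_assoc, hX, one_mul]

theorem mulVec_conjMulVec_of_conj_eq_neg (hΓ : Γ * Γ = 1) {D : Matrix n n K}
    (hD : Γ * D.map (starRingEnd K) * Γ = -D) (v : n → K) :
    D *ᵥ conjMulVec Γ v = -conjMulVec Γ (D *ᵥ v) := by
  have hDΓ : D * Γ = -(Γ * D.map (starRingEnd K)) := by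
    calc D * Γ = -(Γ * D.map (starRingEnd K) * Γ) * Γ := by rw [hD, neg_neg]
      _ = -(Γ * D.map (starRingEnd K)) := by rw [neg_mul, mul_assoc _ Γ Γ, hΓ, mul_one]
  rw [conjMulVec_apply, conjMulVec_apply, mulVec_mulVec, hDΓ, neg_mulVec, ← mulVec_mulVec,
    star_mulVec_eq_map_mulVec]

end Matrix

theorem stmt_3_general {N : ℕ}
    (R Ω : Matrix (Fin N ⊕ Fin N) (Fin N ⊕ Fin N) ℂ)
    (Γ : Matrix (Fin N ⊕ Fin N) (Fin N ⊕ Fin N) ℂ)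
    (hΓ : Γ = Matrix.fromBlocks 0 1 1 0)
    (hRconj : Γ * R.map (starRingEnd ℂ) * Γ = -R)
    (hΩconj : Γ * Ω.map (starRingEnd ℂ) * Γ = Ω)
    (hRunit : IsUnit R.det)
    (D : Matrix (Fin N ⊕ Fin N) (Fin N ⊕ Fin N) ℂ) (hD : D = R⁻¹ * Ω)
    (μ : ℂ) :
    (∃ e : Module.End.eigenspace (Matrix.mulVecLin D) μ ≃ₛₗ[starRingEnd ℂ]
        Module.End.eigenspace (Matrix.mulVecLin D) (-(starRingEnd ℂ μ)),
      ∀ x : Module.End.eigenspace (Matrix.mulVecLin D) μ,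
        (e x : Fin N ⊕ Fin N → ℂ) = Γ.mulVec (star (x : Fin N ⊕ Fin N → ℂ))) ∧
    Module.finrank ℂ (Module.End.eigenspace (Matrix.mulVecLin D) μ)
      = Module.finrank ℂ (Module.End.eigenspace (Matrix.mulVecLin D) (-(starRingEnd ℂ μ))) := by
  have hΓsq : Γ * Γ = 1 := by simp [hΓ, fromBlocks_multiply, ← fromBlocks_one]
  have hΓreal : Γ.map (starRingEnd ℂ) = Γ := by simp [hΓ, fromBlocks_map]
  have hDconj : Γ * D.map (starRingEnd ℂ) * Γ = -D := by
    rw [hD, conj_map_mul hΓsq, conj_map_inv_eq_neg hΓsq hRunit hRconj, hΩconj, neg_mul]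
  let J := LinearEquiv.ofInvolutive (conjMulVec Γ) (conjMulVec_involutive hΓsq hΓreal)
  let e := J.ofSubmodules _ _ <|
    Module.End.map_eigenspace_of_anticomm (f := mulVecLin D) J
      (mulVec_conjMulVec_of_conj_eq_neg hΓsq hDconj) μ
  exact ⟨⟨e, fun _ => rfl⟩, e.finrank_eq_of_semilinear⟩

/-- `v ↦ Γ v̄` is a conjugate-linear bijection from the `μ`-eigenspace of `D`
onto the `(-μ̄)`-eigenspace; in particular those eigenspaces have the same dimension. -/
theorem stmt_3 {N : ℕ} (hN : 0 < N)
    (R Ω : Matrix (Fin N ⊕ Fin N) (Fin N ⊕ Fin N) ℂ)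
    (hR : R.IsHermitian) (hΩ : Ω.IsHermitian)
    (Γ : Matrix (Fin N ⊕ Fin N) (Fin N ⊕ Fin N) ℂ)
    (hΓ : Γ = Matrix.fromBlocks 0 1 1 0)
    (hRconj : Γ * R.map (starRingEnd ℂ) * Γ = -R)
    (hΩconj : Γ * Ω.map (starRingEnd ℂ) * Γ = Ω)
    (hRunit : IsUnit R.det)
    (D : Matrix (Fin N ⊕ Fin N) (Fin N ⊕ Fin N) ℂ) (hD : D = R⁻¹ * Ω)
    (μ : ℂ) :
    (∃ e : Module.End.eigenspace (Matrix.mulVecLin D) μ ≃ₛₗ[starRingEnd ℂ]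
        Module.End.eigenspace (Matrix.mulVecLin D) (-(starRingEnd ℂ μ)),
      ∀ x : Module.End.eigenspace (Matrix.mulVecLin D) μ,
        (e x : Fin N ⊕ Fin N → ℂ) = Γ.mulVec (star (x : Fin N ⊕ Fin N → ℂ))) ∧
    Module.finrank ℂ (Module.End.eigenspace (Matrix.mulVecLin D) μ)
      = Module.finrank ℂ (Module.End.eigenspace (Matrix.mulVecLin D) (-(starRingEnd ℂ μ))) :=
  stmt_3_general R Ω Γ hΓ hRconj hΩconj hRunit D hD μ
end

section
/- Suppose v₁, …, v_N ∈ ℂ^(2N) are eigenvectors of D with D v_n = μ_n v_n where each μ_n is a positive real number, and set u_n = Γ v̄_n. Assume the 2N vectors v₁, …, v_N, u₁, …, u_N are pairwise orthogonal with respect to the R-inner product (⟨w, w'⟩ = 0 for any two distinct vectors w, w' among them) and that ⟨v_n, v_n⟩ = 1 for each n. Then the matrix T whose first N columns are v₁, …, v_N and whose last N columns are u₁, …, u_N is a normal mode transformation with the given μ₁, …, μ_N: it satisfies Tᴴ R T = Σ, T = Γ T̄ Γ, and T⁻¹ D T = diag(μ₁, …, μ_N, −μ₁, …, −μ_N). 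-/
/-!
Write `C x = Γ x̄`. Since `Γ` is a real symmetric involution and `Γ R̄ Γ = -R`, the map `C`
reverses the sign of the `R`-form, `⟨C x, C y⟩ = -conj ⟨x, y⟩`, and since also `Γ Ω̄ Γ = Ω` it
sends an eigenvector of `D = R⁻¹ Ω` for `λ` to one for `-λ̄`. So `Tᴴ R T` is the Gram matrix of
`v₁, …, u_N`, which orthogonality and `⟨uₙ, uₙ⟩ = -⟨vₙ, vₙ⟩ = -1` make equal to `Σ`; the
columns of `T` are eigenvectors, so `D T = T diag(μ, -μ)`, and `T` is invertible because
`Σ² = 1`; finally `C` is an involution exchanging `vₙ` and `uₙ`, which is `T = Γ T̄ Γ`.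
-/

open Matrix

namespace Matrix

theorem isUnit_det_of_mul_eq_of_mul_self_eq_one {n α : Type*} [Fintype n] [DecidableEq n]
    [CommRing α] {A S T : Matrix n n α} (h : A * T = S) (hS : S * S = 1) : IsUnit T.det :=
  isUnit_det_of_left_inverse (B := S * A) (by rw [Matrix.mul_assoc, h, hS])

section Columns

variable {l m n α : Type*} [Fintype m]

theorem mul_of_cols [NonUnitalNonAssocSemiring α] (A : Matrix l m α) (w : n → m → α) :
    A * of (fun i j => w j i) = of fun i j => (A *ᵥ w j) i :=
  rfl

theorem mul_of_cols_eq_of_cols_mul_diagonal [Fintype n] [DecidableEq n] [CommSemiring α]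
    {A : Matrix m m α} {w : n → m → α} {d : n → α} (h : ∀ j, A *ᵥ w j = d j • w j) :
    A * of (fun i j => w j i) = of (fun i j => w j i) * diagonal d := by
  ext i j
  simp [mul_of_cols, mul_diagonal, h, mul_comm]

theorem conjTranspose_mul_mul_of_cols_eq_diagonal [DecidableEq n] [CommSemiring α] [StarRing α]
    {R : Matrix m m α} {w : n → m → α}
    (h : ∀ a b, a ≠ b → star (w a) ⬝ᵥ R *ᵥ w b = 0) :
    (of fun i j => w j i)ᴴ * R * of (fun i j => w j i)
      = diagonal fun a => star (w a) ⬝ᵥ R *ᵥ w a := by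
  rw [Matrix.mul_assoc, mul_of_cols]
  ext a b
  rw [diagonal_apply]
  split_ifs with hab
  · subst hab; rfl
  · exact h a b hab

theorem of_cols_sumElim {n' : Type*} (v : n → l → α) (w : n' → l → α) :
    of (fun i j => Sum.elim v w j i) = fromCols (of fun i j => v j i) (of fun i j => w j i) := by
  ext i (j | j) <;> rfl

end Columns

section Blocks

variable {m n α : Type*} [DecidableEq m]

theorem fromBlocks_zero_one_one_zero_mul_self [Fintype m] [Semiring α] :
    (fromBlocks 0 1 1 0 : Matrix (m ⊕ m) (m ⊕ m) α) * fromBlocks 0 1 1 0 = 1 := by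
  simp [fromBlocks_multiply, fromBlocks_one]

theorem transpose_fromBlocks_zero_one_one_zero [Zero α] [One α] :
    (fromBlocks 0 1 1 0 : Matrix (m ⊕ m) (m ⊕ m) α)ᵀ = fromBlocks 0 1 1 0 := by
  simp [fromBlocks_transpose]

theorem map_fromBlocks_zero_one_one_zero {β : Type*} [Semiring α] [Semiring β] (f : α →+* β) :
    (fromBlocks 0 1 1 0 : Matrix (m ⊕ m) (m ⊕ m) α).map f = fromBlocks 0 1 1 0 := by
  simp [fromBlocks_map]

theorem fromCols_mul_fromBlocks_zero_one_one_zero [Fintype m] [Semiring α] (A B : Matrix n m α) :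
    fromCols A B * (fromBlocks 0 1 1 0 : Matrix (m ⊕ m) (m ⊕ m) α) = fromCols B A := by
  rw [fromCols_mul_fromBlocks]
  simp

theorem fromBlocks_one_zero_zero_neg_one_eq_diagonal [Ring α] :
    (fromBlocks 1 0 0 (-1) : Matrix (m ⊕ m) (m ⊕ m) α) = diagonal (Sum.elim 1 (-1)) := by
  rw [← fromBlocks_diagonal, ← diagonal_one', diagonal_neg]
  rfl

theorem fromBlocks_one_zero_zero_neg_one_mul_self [Fintype m] [Ring α] :
    (fromBlocks 1 0 0 (-1) : Matrix (m ⊕ m) (m ⊕ m) α) * fromBlocks 1 0 0 (-1) = 1 := by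
  simp [fromBlocks_multiply, fromBlocks_one]

end Blocks

section Conjugation

variable {m n α : Type*} [Fintype n] [CommRing α] [StarRing α] {Γ : Matrix n n α}

theorem star_mulVec_eq_map_mulVec_star (A : Matrix m n α) (x : n → α) :
    star (A *ᵥ x) = A.map (starRingEnd α) *ᵥ star x :=
  funext fun i => RingHom.map_mulVec (starRingEnd α) A x i

variable [DecidableEq n]

theorem mulVec_mulVec_star_of_mul_map_mul_eq (hΓ : Γ * Γ = 1) {A B : Matrix n n α}
    (h : Γ * A.map (starRingEnd α) * Γ = B) (x : n → α) :
    B *ᵥ (Γ *ᵥ star x) = Γ *ᵥ star (A *ᵥ x) := by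
  rw [← h, mulVec_mulVec, mul_assoc, hΓ, mul_one, star_mulVec_eq_map_mulVec_star,
    mulVec_mulVec]

theorem star_mulVec_star_dotProduct_mulVec_mulVec_star (hΓ : Γ * Γ = 1) (hΓt : Γᵀ = Γ)
    (hΓr : Γ.map (starRingEnd α) = Γ) {R : Matrix n n α}
    (hR : Γ * R.map (starRingEnd α) * Γ = -R) (x y : n → α) :
    star (Γ *ᵥ star x) ⬝ᵥ R *ᵥ (Γ *ᵥ star y) = -star (star x ⬝ᵥ R *ᵥ y) := by
  have hRy : R *ᵥ (Γ *ᵥ star y) = -(Γ *ᵥ star (R *ᵥ y)) := by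
    rw [← mulVec_mulVec_star_of_mul_map_mul_eq hΓ hR, neg_mulVec, neg_neg]
  have hΓx : star (Γ *ᵥ star x) = x ᵥ* Γ := by
    rw [star_mulVec_eq_map_mulVec_star, hΓr, star_star, ← vecMul_transpose, hΓt]
  rw [hRy, hΓx, dotProduct_neg, ← dotProduct_mulVec, mulVec_mulVec, hΓ, one_mulVec,
    dotProduct_star, dotProduct_comm]

theorem inv_mul_mulVec_mulVec_star (hΓ : Γ * Γ = 1) {R Ω : Matrix n n α}
    (hR : Γ * R.map (starRingEnd α) * Γ = -R) (hΩ : Γ * Ω.map (starRingEnd α) * Γ = Ω)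
    (hRdet : IsUnit R.det) {x : n → α} {c : α} (hx : (R⁻¹ * Ω) *ᵥ x = c • x) :
    (R⁻¹ * Ω) *ᵥ (Γ *ᵥ star x) = -star c • (Γ *ᵥ star x) := by
  have hΩx : Ω *ᵥ x = c • R *ᵥ x := by
    rw [← mul_nonsing_inv_cancel_left R Ω hRdet, ← mulVec_mulVec, hx, mulVec_smul]
  rw [← mulVec_mulVec, mulVec_mulVec_star_of_mul_map_mul_eq hΓ hΩ, hΩx, star_smul,
    mulVec_smul, ← mulVec_mulVec_star_of_mul_map_mul_eq hΓ hR, mulVec_smul, mulVec_mulVec,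
    mul_neg, nonsing_inv_mul _ hRdet, neg_mulVec, one_mulVec, smul_neg, neg_smul]

theorem fromCols_eq_mul_map_mul_fromBlocks_zero_one_one_zero [Fintype m] [DecidableEq m]
    (hΓ : Γ * Γ = 1) (hΓr : Γ.map (starRingEnd α) = Γ) (V : Matrix n m α) :
    fromCols V (Γ * V.map (starRingEnd α))
      = Γ * (fromCols V (Γ * V.map (starRingEnd α))).map (starRingEnd α)
        * (fromBlocks 0 1 1 0 : Matrix (m ⊕ m) (m ⊕ m) α) := by
  rw [fromCols_map, mul_fromCols, fromCols_mul_fromBlocks_zero_one_one_zero, Matrix.map_mul,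
    hΓr, ← Matrix.mul_assoc, hΓ, Matrix.one_mul]
  simp [Matrix.map_map, Function.comp_def]

end Conjugation

end Matrix

theorem stmt_5_general {N : ℕ}
    (R Ω : Matrix (Fin N ⊕ Fin N) (Fin N ⊕ Fin N) ℂ)
    (Γ Sig : Matrix (Fin N ⊕ Fin N) (Fin N ⊕ Fin N) ℂ)
    (hΓ : Γ = Matrix.fromBlocks 0 1 1 0)
    (hSig : Sig = Matrix.fromBlocks 1 0 0 (-1))
    (hRconj : Γ * R.map (starRingEnd ℂ) * Γ = -R)
    (hΩconj : Γ * Ω.map (starRingEnd ℂ) * Γ = Ω)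
    (hRunit : IsUnit R.det)
    (D : Matrix (Fin N ⊕ Fin N) (Fin N ⊕ Fin N) ℂ) (hD : D = R⁻¹ * Ω)
    (v : Fin N → (Fin N ⊕ Fin N) → ℂ) (μ : Fin N → ℝ)
    (heig : ∀ i, D.mulVec (v i) = (μ i : ℂ) • v i)
    (u : Fin N → (Fin N ⊕ Fin N) → ℂ)
    (hu : ∀ i, u i = Γ.mulVec (star (v i)))
    (horth : ∀ a b : Fin N ⊕ Fin N, a ≠ b →
      star (Sum.elim v u a) ⬝ᵥ R.mulVec (Sum.elim v u b) = 0)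
    (hnorm : ∀ i, star (v i) ⬝ᵥ R.mulVec (v i) = 1)
    (T : Matrix (Fin N ⊕ Fin N) (Fin N ⊕ Fin N) ℂ)
    (hT : T = Matrix.of fun i j => Sum.elim v u j i) :
    Tᴴ * R * T = Sig ∧ T = Γ * T.map (starRingEnd ℂ) * Γ ∧
      T⁻¹ * D * T
        = Matrix.diagonal (Sum.elim (fun i => (μ i : ℂ)) fun i => -(μ i : ℂ)) := by
  obtain rfl : u = fun i => Γ *ᵥ star (v i) := funext hu
  have hΓΓ : Γ * Γ = 1 := hΓ ▸ fromBlocks_zero_one_one_zero_mul_self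
  have hΓr : Γ.map (starRingEnd ℂ) = Γ := hΓ ▸ map_fromBlocks_zero_one_one_zero _
  have hΓt : Γᵀ = Γ := hΓ ▸ transpose_fromBlocks_zero_one_one_zero
  have hgram : Tᴴ * R * T = Sig := by
    rw [hT, conjTranspose_mul_mul_of_cols_eq_diagonal horth, hSig,
      fromBlocks_one_zero_zero_neg_one_eq_diagonal]
    congr 1
    ext (i | i)
    · exact hnorm i
    · simp only [Sum.elim_inr, star_mulVec_star_dotProduct_mulVec_mulVec_star hΓΓ hΓt hΓr hRconj,
        hnorm, star_one]
      rfl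
  refine ⟨hgram, ?_, ?_⟩
  · rw [hT, of_cols_sumElim]
    conv_rhs => arg 2; rw [hΓ]
    exact fromCols_eq_mul_map_mul_fromBlocks_zero_one_one_zero hΓΓ hΓr (of fun i j => v j i)
  · have hT_unit : IsUnit T.det := isUnit_det_of_mul_eq_of_mul_self_eq_one (hgram.trans hSig)
      fromBlocks_one_zero_zero_neg_one_mul_self
    rw [Matrix.mul_assoc, hT, mul_of_cols_eq_of_cols_mul_diagonal (fun j => ?_),
      ← Matrix.mul_assoc, nonsing_inv_mul _ (hT ▸ hT_unit), Matrix.one_mul]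
    cases j with
    | inl i => exact heig i
    | inr i =>
      simp [hD, inv_mul_mulVec_mulVec_star hΓΓ hRconj hΩconj hRunit (hD ▸ heig i)]

/-- an R-orthonormal family of eigenvectors of `D` with positive eigenvalues,
together with their conjugate partners, assembles into a normal mode transformation. -/
theorem stmt_5 {N : ℕ} (hN : 0 < N)
    (R Ω : Matrix (Fin N ⊕ Fin N) (Fin N ⊕ Fin N) ℂ)
    (hR : R.IsHermitian) (hΩ : Ω.IsHermitian)
    (Γ Sig : Matrix (Fin N ⊕ Fin N) (Fin N ⊕ Fin N) ℂ)
    (hΓ : Γ = Matrix.fromBlocks 0 1 1 0)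
    (hSig : Sig = Matrix.fromBlocks 1 0 0 (-1))
    (hRconj : Γ * R.map (starRingEnd ℂ) * Γ = -R)
    (hΩconj : Γ * Ω.map (starRingEnd ℂ) * Γ = Ω)
    (hRunit : IsUnit R.det)
    (D : Matrix (Fin N ⊕ Fin N) (Fin N ⊕ Fin N) ℂ) (hD : D = R⁻¹ * Ω)
    (v : Fin N → (Fin N ⊕ Fin N) → ℂ) (μ : Fin N → ℝ)
    (hμpos : ∀ i, 0 < μ i)
    (heig : ∀ i, D.mulVec (v i) = (μ i : ℂ) • v i)
    (u : Fin N → (Fin N ⊕ Fin N) → ℂ)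
    (hu : ∀ i, u i = Γ.mulVec (star (v i)))
    (horth : ∀ a b : Fin N ⊕ Fin N, a ≠ b →
      star (Sum.elim v u a) ⬝ᵥ R.mulVec (Sum.elim v u b) = 0)
    (hnorm : ∀ i, star (v i) ⬝ᵥ R.mulVec (v i) = 1)
    (T : Matrix (Fin N ⊕ Fin N) (Fin N ⊕ Fin N) ℂ)
    (hT : T = Matrix.of fun i j => Sum.elim v u j i) :
    Tᴴ * R * T = Sig ∧ T = Γ * T.map (starRingEnd ℂ) * Γ ∧
      T⁻¹ * D * T
        = Matrix.diagonal (Sum.elim (fun i => (μ i : ℂ)) fun i => -(μ i : ℂ)) :=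
  stmt_5_general R Ω Γ Sig hΓ hSig hRconj hΩconj hRunit D hD v μ heig u hu horth hnorm T hT
end

section
/- Assume in addition that Ω is positive definite. If D v = μ v for some nonzero v ∈ ℂ^(2N) and some positive real number μ, then the R-inner product ⟨v, v⟩ = vᴴ R v is a positive real number. -/
open Matrix ComplexOrder

/-! Since `R D = Ω`, the eigenvector equation `D v = μ v` gives `Ω v = μ R v`, hence
`vᴴ Ω v = μ · vᴴ R v`. The left side is a positive real because `Ω` is positive definite, and
dividing by `μ > 0` keeps it one. -/

namespace Matrix

variable {n 𝕜 : Type*} [Fintype n] [RCLike 𝕜]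

theorem mulVec_eq_smul_mulVec_of_inv_mul_mulVec_eq_smul [DecidableEq n] {A B : Matrix n n 𝕜}
    (hA : IsUnit A.det) {v : n → 𝕜} {c : 𝕜} (h : (A⁻¹ * B) *ᵥ v = c • v) :
    B *ᵥ v = c • A *ᵥ v := by
  rw [← mulVec_smul, ← h, mulVec_mulVec, mul_nonsing_inv_cancel_left _ _ hA]

theorem PosDef.dotProduct_mulVec_pos_of_mulVec_eq_smul {A B : Matrix n n 𝕜} (hB : B.PosDef)
    {v : n → 𝕜} (hv : v ≠ 0) {μ : ℝ} (hμ : 0 < μ) (h : B *ᵥ v = (μ : 𝕜) • A *ᵥ v) :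
    0 < star v ⬝ᵥ A *ᵥ v := by
  have hBv : star v ⬝ᵥ B *ᵥ v = μ * (star v ⬝ᵥ A *ᵥ v) := by
    rw [h, dotProduct_smul, smul_eq_mul]
  have hμ_inv : (0 : 𝕜) < (μ⁻¹ : ℝ) := RCLike.ofReal_pos.2 (inv_pos.2 hμ)
  calc (0 : 𝕜) < (μ⁻¹ : ℝ) * (star v ⬝ᵥ B *ᵥ v) := mul_pos hμ_inv (hB.dotProduct_mulVec_pos hv)
    _ = star v ⬝ᵥ A *ᵥ v := by
      rw [hBv, RCLike.ofReal_inv, inv_mul_cancel_left₀ (RCLike.ofReal_ne_zero.2 hμ.ne')]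

end Matrix

theorem stmt_7_general {N : ℕ}
    (R Ω : Matrix (Fin N ⊕ Fin N) (Fin N ⊕ Fin N) ℂ)
    (hRunit : IsUnit R.det)
    (D : Matrix (Fin N ⊕ Fin N) (Fin N ⊕ Fin N) ℂ) (hD : D = R⁻¹ * Ω)
    (hΩpos : Ω.PosDef)
    (v : Fin N ⊕ Fin N → ℂ) (hv : v ≠ 0) (μ : ℝ) (hμ : 0 < μ)
    (heig : D.mulVec v = (μ : ℂ) • v) :
    ∃ r : ℝ, 0 < r ∧ star v ⬝ᵥ R.mulVec v = (r : ℂ) := by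
  subst hD
  have hΩv := mulVec_eq_smul_mulVec_of_inv_mul_mulVec_eq_smul hRunit heig
  obtain ⟨r, hr, hvRv⟩ := RCLike.pos_iff_exists_ofReal.1
    (hΩpos.dotProduct_mulVec_pos_of_mulVec_eq_smul hv hμ hΩv)
  exact ⟨r, hr, hvRv.symm⟩

/-- if `Ω` is positive definite and `D v = μ v` with `v ≠ 0` and `μ` a positive
real, then `⟨v, v⟩ = vᴴ R v` is a positive real number. -/
theorem stmt_7 {N : ℕ} (hN : 0 < N)
    (R Ω : Matrix (Fin N ⊕ Fin N) (Fin N ⊕ Fin N) ℂ)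
    (hR : R.IsHermitian) (hΩ : Ω.IsHermitian)
    (Γ : Matrix (Fin N ⊕ Fin N) (Fin N ⊕ Fin N) ℂ)
    (hΓ : Γ = Matrix.fromBlocks 0 1 1 0)
    (hRconj : Γ * R.map (starRingEnd ℂ) * Γ = -R)
    (hΩconj : Γ * Ω.map (starRingEnd ℂ) * Γ = Ω)
    (hRunit : IsUnit R.det)
    (D : Matrix (Fin N ⊕ Fin N) (Fin N ⊕ Fin N) ℂ) (hD : D = R⁻¹ * Ω)
    (hΩpos : Ω.PosDef)
    (v : Fin N ⊕ Fin N → ℂ) (hv : v ≠ 0) (μ : ℝ) (hμ : 0 < μ)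
    (heig : D.mulVec v = (μ : ℂ) • v) :
    ∃ r : ℝ, 0 < r ∧ star v ⬝ᵥ R.mulVec v = (r : ℂ) :=
  stmt_7_general R Ω hRunit D hD hΩpos v hv μ hμ heig
end

section
/- Assume in addition that Ω is positive definite. Then a normal mode transformation exists: there are a 2N×2N complex matrix T and positive real numbers μ₁, …, μ_N such that Tᴴ R T = Σ, T = Γ T̄ Γ, and T⁻¹ D T = diag(μ₁, …, μ_N, −μ₁, …, −μ_N). -/
open Matrix ComplexOrder

/-!
Write `K A = Γ Ā Γ`. Put `Q = Ω^{-1/2}`; uniqueness of the square root gives `K Q = Q`, so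
`H = Q R Q` is Hermitian, invertible and satisfies `K H = -H`. Hence `v ↦ Γ v̄` maps
`ε`-eigenvectors of `H` to `(-ε)`-eigenvectors: the unitary `C = Uᴴ Γ Ū` intertwines
`diag ε` with `diag (-ε)`, so `H` has as many positive as negative eigenvalues, i.e. exactly `N`
positive ones. The positive eigenvectors, rescaled by `ε^{-1/2}`, together with their images
under `v ↦ Γ v̄` form the columns of a matrix `P` with `K P = P`, `Pᴴ H P = Σ` and
`Pᴴ P = diag (μ, μ)`, `μ = ε⁻¹`. Then `T = Q P` works, because
`T⁻¹ R⁻¹ Ω T = (Tᴴ R T)⁻¹ (Tᴴ Ω T) = Σ diag (μ, μ)`.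
-/

namespace Matrix

variable {ι κ n m α : Type*}

section Diagonal

variable [Fintype ι] [DecidableEq ι] [Field α]

theorem eq_zero_of_diagonal_mul_eq_mul_diagonal [Fintype κ] [DecidableEq κ] {a : ι → α}
    {b : κ → α} {X : Matrix ι κ α} (hab : ∀ i k, a i ≠ b k)
    (h : diagonal a * X = X * diagonal b) : X = 0 := by
  ext i k
  have hik : a i * X i k = X i k * b k := by simpa using congrFun (congrFun h i) k
  have : (a i - b k) * X i k = 0 := by linear_combination hik
  exact (mul_eq_zero.mp this).resolve_left (sub_ne_zero.mpr (hab i k))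

theorem diagonal_comp_mul_eq_mul_diagonal_comp {a b : ι → α} {C : Matrix ι ι α}
    (h : diagonal a * C = C * diagonal b) (φ : α → α) :
    diagonal (φ ∘ a) * C = C * diagonal (φ ∘ b) := by
  ext i k
  have hik : a i * C i k = C i k * b k := by simpa using congrFun (congrFun h i) k
  simp only [diagonal_mul, mul_diagonal, Function.comp_apply]
  by_cases hC : C i k = 0
  · simp [hC]
  · rw [mul_comm, mul_right_cancel₀ hC (hik.trans (mul_comm _ _))]

theorem sum_comp_eq_of_diagonal_mul_eq_mul_diagonal {a b : ι → α} {C : Matrix ι ι α}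
    (hC : IsUnit C.det) (h : diagonal a * C = C * diagonal b) (φ : α → α) :
    ∑ i, φ (a i) = ∑ i, φ (b i) := by
  calc ∑ i, φ (a i) = trace (diagonal (φ ∘ a) * C * C⁻¹) := by
        rw [mul_nonsing_inv_cancel_right _ _ hC, trace_diagonal]; rfl
    _ = trace (C⁻¹ * C * diagonal (φ ∘ b)) := by
        rw [diagonal_comp_mul_eq_mul_diagonal_comp h, trace_mul_cycle, mul_assoc]
    _ = ∑ i, φ (b i) := by rw [nonsing_inv_mul _ hC, one_mul, trace_diagonal]; rfl

end Diagonal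

theorem inv_mul_mul_eq_of_conjTranspose_mul_mul_eq [Fintype ι] [DecidableEq ι] [CommRing α]
    [StarRing α] {R Ω T A B : Matrix ι ι α} (hA : IsUnit A.det) (hRT : Tᴴ * R * T = A)
    (hΩT : Tᴴ * Ω * T = B) : T⁻¹ * (R⁻¹ * Ω) * T = A⁻¹ * B := by
  have hdetA : A.det = star T.det * R.det * T.det := by
    rw [← hRT, det_mul, det_mul, det_conjTranspose]
  have hT : IsUnit T.det := isUnit_of_mul_isUnit_right (hdetA ▸ hA)
  have hTH : IsUnit Tᴴ.det := by rw [det_conjTranspose]; exact hT.star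
  rw [← hRT, ← hΩT, mul_inv_rev, mul_inv_rev]
  simp only [mul_assoc, nonsing_inv_mul_cancel_left _ _ hTH]

theorem IsHermitian.conjTranspose_mul_eq_diagonal_mul [Fintype n] [Fintype m] [DecidableEq m]
    {H : Matrix n n ℂ} (hH : H.IsHermitian) {E : Matrix n m ℂ} {ν : m → ℝ}
    (hE : H * E = E * diagonal fun i => (ν i : ℂ)) :
    Eᴴ * H = (diagonal fun i => (ν i : ℂ)) * Eᴴ := by
  simpa [hH.eq, Pi.star_def] using congrArg Matrix.conjTranspose hE

theorem IsHermitian.mul_eigenvectorUnitary [Fintype n] [DecidableEq n] {𝕜 : Type*} [RCLike 𝕜]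
    {A : Matrix n n 𝕜} (hA : A.IsHermitian) :
    A * (hA.eigenvectorUnitary : Matrix n n 𝕜) =
      (hA.eigenvectorUnitary : Matrix n n 𝕜) * diagonal (RCLike.ofReal ∘ hA.eigenvalues) := by
  have h := hA.conjStarAlgAut_star_eigenvectorUnitary
  rw [Unitary.conjStarAlgAut_star_apply] at h
  rw [← h, ← Matrix.mul_assoc, ← Matrix.mul_assoc,
    Unitary.mul_star_self_of_mem hA.eigenvectorUnitary.2, Matrix.one_mul]

section Blocks

variable [Fintype n] [DecidableEq n]

theorem fromBlocks_zero_one_one_zero_mul [NonAssocSemiring α] (A : Matrix (n ⊕ n) m α) :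
    (fromBlocks 0 1 1 0 : Matrix (n ⊕ n) (n ⊕ n) α) * A = A.submatrix Sum.swap id := by
  ext (i | i) j <;> simp [mul_apply, Fintype.sum_sum_type, one_apply]

theorem mul_fromBlocks_zero_one_one_zero [NonAssocSemiring α] (A : Matrix m (n ⊕ n) α) :
    A * (fromBlocks 0 1 1 0 : Matrix (n ⊕ n) (n ⊕ n) α) = A.submatrix id Sum.swap := by
  ext i (j | j) <;> simp [mul_apply, Fintype.sum_sum_type, one_apply]

theorem inv_fromBlocks_one_zero_zero_neg_one [CommRing α] :
    (fromBlocks 1 0 0 (-1) : Matrix (n ⊕ n) (n ⊕ n) α)⁻¹ = fromBlocks 1 0 0 (-1) :=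
  inv_eq_left_inv (by simp [fromBlocks_multiply])

theorem isUnit_det_fromBlocks_one_zero_zero_neg_one [CommRing α] :
    IsUnit (fromBlocks 1 0 0 (-1) : Matrix (n ⊕ n) (n ⊕ n) α).det :=
  isUnit_det_of_left_inverse (B := fromBlocks 1 0 0 (-1)) (by simp [fromBlocks_multiply])

end Blocks

section SwapConj

/-- `swapConj A = Γ Ā` and `swapConjSwap A = Γ Ā Γ`, where `Γ = fromBlocks 0 1 1 0`. -/
def swapConj (A : Matrix (n ⊕ n) m ℂ) : Matrix (n ⊕ n) m ℂ :=
  (A.map (starRingEnd ℂ)).submatrix Sum.swap id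

def swapConjSwap (A : Matrix (n ⊕ n) (n ⊕ n) ℂ) : Matrix (n ⊕ n) (n ⊕ n) ℂ :=
  (A.map (starRingEnd ℂ)).submatrix Sum.swap Sum.swap

theorem swapConjSwap_swapConjSwap (A : Matrix (n ⊕ n) (n ⊕ n) ℂ) :
    swapConjSwap (swapConjSwap A) = A := by
  ext i j; simp [swapConjSwap]

theorem swapConjSwap_conjTranspose (A : Matrix (n ⊕ n) (n ⊕ n) ℂ) :
    swapConjSwap Aᴴ = (swapConjSwap A)ᴴ := by
  ext i j; simp [swapConjSwap]

theorem swapConjSwap_one [DecidableEq n] :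
    swapConjSwap (1 : Matrix (n ⊕ n) (n ⊕ n) ℂ) = 1 := by
  simp [swapConjSwap, submatrix_one _ (Function.Involutive.injective Sum.swap_swap)]

theorem swapConj_mul_diagonal_ofReal [Fintype m] [DecidableEq m] (A : Matrix (n ⊕ n) m ℂ)
    (d : m → ℝ) :
    swapConj (A * diagonal fun i => (d i : ℂ)) = swapConj A * diagonal fun i => (d i : ℂ) := by
  ext i j; simp [swapConj, mul_diagonal]

variable [Fintype n]

theorem fromBlocks_mul_map_mul_fromBlocks [DecidableEq n] (A : Matrix (n ⊕ n) (n ⊕ n) ℂ) :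
    fromBlocks 0 1 1 0 * A.map (starRingEnd ℂ) * fromBlocks 0 1 1 0 = swapConjSwap A := by
  rw [fromBlocks_zero_one_one_zero_mul, mul_fromBlocks_zero_one_one_zero]
  rfl

theorem swapConjSwap_mul (A B : Matrix (n ⊕ n) (n ⊕ n) ℂ) :
    swapConjSwap (A * B) = swapConjSwap A * swapConjSwap B := by
  rw [swapConjSwap, swapConjSwap, swapConjSwap, Matrix.map_mul,
    submatrix_mul _ _ _ _ _ (Function.Involutive.bijective Sum.swap_swap)]

theorem swapConjSwap_nonsing_inv [DecidableEq n] {A : Matrix (n ⊕ n) (n ⊕ n) ℂ}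
    (hA : IsUnit A.det) : swapConjSwap A⁻¹ = (swapConjSwap A)⁻¹ :=
  (inv_eq_left_inv (by rw [← swapConjSwap_mul, nonsing_inv_mul _ hA, swapConjSwap_one])).symm

theorem swapConjSwap_mul_swapConj (A : Matrix (n ⊕ n) (n ⊕ n) ℂ)
    (B : Matrix (n ⊕ n) m ℂ) :
    swapConjSwap A * swapConj B = swapConj (A * B) := by
  rw [swapConjSwap, swapConj, swapConj, Matrix.map_mul,
    submatrix_mul _ _ _ _ _ (Function.Involutive.bijective Sum.swap_swap)]

theorem mul_swapConj (A : Matrix (n ⊕ n) (n ⊕ n) ℂ) (B : Matrix (n ⊕ n) m ℂ) :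
    A * swapConj B = swapConj (swapConjSwap A * B) := by
  rw [← swapConjSwap_mul_swapConj, swapConjSwap_swapConjSwap]

theorem conjTranspose_swapConj_mul_swapConj (A B : Matrix (n ⊕ n) m ℂ) :
    (swapConj A)ᴴ * swapConj B = (Aᴴ * B).map (starRingEnd ℂ) := by
  rw [swapConj, swapConj, conjTranspose_submatrix,
    ← submatrix_mul _ _ _ _ _ (Function.Involutive.bijective Sum.swap_swap), Matrix.map_mul,
    conjTranspose_map (starRingEnd ℂ) (fun _ => rfl)]
  rfl

theorem mul_swapConj_eq_of_mul_eq [Fintype m] [DecidableEq m] {H : Matrix (n ⊕ n) (n ⊕ n) ℂ}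
    (hswap : swapConjSwap H = -H) {E : Matrix (n ⊕ n) m ℂ} {ν : m → ℝ}
    (hE : H * E = E * diagonal fun i => (ν i : ℂ)) :
    H * swapConj E = swapConj E * diagonal fun i => ((-ν i : ℝ) : ℂ) := by
  have hneg :
      -(E * diagonal fun i => (ν i : ℂ)) = E * diagonal fun i => ((-ν i : ℝ) : ℂ) := by
    ext; simp [mul_diagonal]
  rw [mul_swapConj, hswap, Matrix.neg_mul, hE, hneg, swapConj_mul_diagonal_ofReal]

theorem IsHermitian.diagonal_mul_conjTranspose_mul_swapConj [Fintype m] [DecidableEq m]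
    (hH : H.IsHermitian) (hswap : swapConjSwap H = -H) {E : Matrix (n ⊕ n) m ℂ} {ν : m → ℝ}
    (hE : H * E = E * diagonal fun i => (ν i : ℂ)) :
    (diagonal fun i => (ν i : ℂ)) * (Eᴴ * swapConj E) =
      (Eᴴ * swapConj E) * diagonal fun i => ((-ν i : ℝ) : ℂ) := by
  rw [← Matrix.mul_assoc, ← hH.conjTranspose_mul_eq_diagonal_mul hE, Matrix.mul_assoc,
    mul_swapConj_eq_of_mul_eq hswap hE, Matrix.mul_assoc]

theorem IsHermitian.conjTranspose_mul_swapConj_eq_zero [Fintype m] [DecidableEq m]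
    (hH : H.IsHermitian) (hswap : swapConjSwap H = -H) {E : Matrix (n ⊕ n) m ℂ} {ν : m → ℝ}
    (hν : ∀ i, 0 < ν i) (hE : H * E = E * diagonal fun i => (ν i : ℂ)) :
    Eᴴ * swapConj E = 0 := by
  refine eq_zero_of_diagonal_mul_eq_mul_diagonal (fun i k h => ?_)
    (hH.diagonal_mul_conjTranspose_mul_swapConj hswap hE)
  have := Complex.ofReal_injective h
  linarith [hν i, hν k]

open scoped MatrixOrder in
theorem swapConjSwap_sqrt [DecidableEq n] {A : Matrix (n ⊕ n) (n ⊕ n) ℂ} (hA : A.PosSemidef)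
    (h : swapConjSwap A = A) : swapConjSwap (CFC.sqrt A) = CFC.sqrt A := by
  obtain ⟨B, hB⟩ := CStarAlgebra.nonneg_iff_eq_star_mul_self.mp (CFC.sqrt_nonneg A)
  have hpsd : (swapConjSwap (CFC.sqrt A)).PosSemidef := by
    rw [hB, star_eq_conjTranspose, swapConjSwap_mul, swapConjSwap_conjTranspose]
    exact posSemidef_conjTranspose_mul_self _
  refine ((CFC.sqrt_eq_iff A _ hA.nonneg hpsd.nonneg).mpr ?_).symm
  rw [← swapConjSwap_mul, CFC.sqrt_mul_sqrt_self A hA.nonneg, h]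

open scoped MatrixOrder in
theorem PosDef.exists_invSqrt_swapConjSwap_eq [DecidableEq n] {Ω : Matrix (n ⊕ n) (n ⊕ n) ℂ}
    (hΩ : Ω.PosDef) (h : swapConjSwap Ω = Ω) :
    ∃ Q : Matrix (n ⊕ n) (n ⊕ n) ℂ,
      Q.IsHermitian ∧ IsUnit Q.det ∧ Q * Ω * Q = 1 ∧ swapConjSwap Q = Q := by
  set S := CFC.sqrt Ω
  have hSS : S * S = Ω := CFC.sqrt_mul_sqrt_self Ω hΩ.posSemidef.nonneg
  have hS : IsUnit S.det := by
    refine isUnit_of_mul_isUnit_left (x := S.det) (y := S.det) ?_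
    rw [← det_mul, hSS]
    exact isUnit_iff_ne_zero.mpr hΩ.det_pos.ne'
  refine ⟨S⁻¹, (CFC.sqrt_nonneg Ω).posSemidef.isHermitian.inv, isUnit_nonsing_inv_det _ hS,
    ?_, ?_⟩
  · rw [← hSS, ← Matrix.mul_assoc, nonsing_inv_mul _ hS, Matrix.one_mul, mul_nonsing_inv _ hS]
  · rw [swapConjSwap_nonsing_inv hS, swapConjSwap_sqrt hΩ.posSemidef h]

end SwapConj

def pairCols (A : Matrix (n ⊕ n) m ℂ) : Matrix (n ⊕ n) (m ⊕ m) ℂ :=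
  fromCols A (swapConj A)

theorem swapConjSwap_pairCols (A : Matrix (n ⊕ n) n ℂ) :
    swapConjSwap (pairCols A) = pairCols A := by
  ext i (j | j) <;> simp [swapConjSwap, pairCols, swapConj]

theorem conjTranspose_pairCols_mul_mul_pairCols [Fintype n] (M : Matrix (n ⊕ n) (n ⊕ n) ℂ)
    (A : Matrix (n ⊕ n) m ℂ) :
    (pairCols A)ᴴ * M * pairCols A =
      fromBlocks (Aᴴ * M * A) (Aᴴ * M * swapConj A) ((swapConj A)ᴴ * M * A)
        ((Aᴴ * swapConjSwap M * A).map (starRingEnd ℂ)) := by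
  have h₂₂ : (swapConj A)ᴴ * M * swapConj A =
      (Aᴴ * swapConjSwap M * A).map (starRingEnd ℂ) := by
    rw [Matrix.mul_assoc, mul_swapConj, conjTranspose_swapConj_mul_swapConj, Matrix.mul_assoc]
  rw [pairCols, conjTranspose_fromCols_eq_fromRows_conjTranspose, fromRows_mul,
    fromRows_mul_fromCols, h₂₂]

section Spectral

variable [Fintype n] [DecidableEq n] {H : Matrix (n ⊕ n) (n ⊕ n) ℂ}

theorem IsHermitian.card_pos_eigenvalues (hH : H.IsHermitian) (hdet : IsUnit H.det)
    (hswap : swapConjSwap H = -H) :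
    Fintype.card {j // 0 < hH.eigenvalues j} = Fintype.card n := by
  set U : Matrix (n ⊕ n) (n ⊕ n) ℂ := (hH.eigenvectorUnitary : Matrix (n ⊕ n) (n ⊕ n) ℂ)
  have hUU : Uᴴ * U = 1 := Unitary.star_mul_self_of_mem hH.eigenvectorUnitary.2
  have hUU' : U * Uᴴ = 1 := Unitary.mul_star_self_of_mem hH.eigenvectorUnitary.2
  have hC : IsUnit (Uᴴ * swapConj U).det := by
    refine isUnit_det_of_left_inverse (B := (swapConj U)ᴴ * U) ?_
    rw [Matrix.mul_assoc, ← Matrix.mul_assoc U, hUU', Matrix.one_mul,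
      conjTranspose_swapConj_mul_swapConj, hUU]
    simp
  have hcount : (Finset.univ.filter fun j => 0 < hH.eigenvalues j).card =
      (Finset.univ.filter fun j => 0 < -hH.eigenvalues j).card := by
    have h := sum_comp_eq_of_diagonal_mul_eq_mul_diagonal hC
      (hH.diagonal_mul_conjTranspose_mul_swapConj hswap (ν := hH.eigenvalues)
        hH.mul_eigenvectorUnitary)
      (fun z => if 0 < z.re then 1 else 0)
    simpa only [Complex.ofReal_re, Finset.sum_boole, Nat.cast_inj] using h
  have hne : ∀ j, hH.eigenvalues j ≠ 0 := by
    have := hdet.ne_zero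
    rw [hH.det_eq_prod_eigenvalues, Finset.prod_ne_zero_iff] at this
    exact fun j h => this j (Finset.mem_univ j) (by simp [h])
  have hneg : (Finset.univ.filter fun j => 0 < -hH.eigenvalues j) =
      Finset.univ.filter fun j => ¬ 0 < hH.eigenvalues j :=
    Finset.filter_congr fun j _ => by
      constructor <;> intro h
      · linarith
      · exact neg_pos.mpr ((not_lt.mp h).lt_of_ne (hne j))
  have htot := Finset.card_filter_add_card_filter_not (s := Finset.univ)
    (fun j => 0 < hH.eigenvalues j)
  rw [← hneg, ← hcount, Finset.card_univ, Fintype.card_sum] at htot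
  rw [Fintype.card_subtype]
  omega

theorem IsHermitian.exists_pos_eigenvectors (hH : H.IsHermitian) (hdet : IsUnit H.det)
    (hswap : swapConjSwap H = -H) :
    ∃ (E : Matrix (n ⊕ n) n ℂ) (ν : n → ℝ),
      (∀ i, 0 < ν i) ∧ Eᴴ * E = 1 ∧ H * E = E * diagonal fun i => (ν i : ℂ) := by
  set U : Matrix (n ⊕ n) (n ⊕ n) ℂ := (hH.eigenvectorUnitary : Matrix (n ⊕ n) (n ⊕ n) ℂ)
  let e := (Fintype.equivOfCardEq (hH.card_pos_eigenvalues hdet hswap)).symm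
  let f : n ↪ n ⊕ n := e.toEmbedding.trans (Function.Embedding.subtype _)
  refine ⟨U.submatrix id f, hH.eigenvalues ∘ f, fun i => (e i).2, ?_, ?_⟩
  · have hUU : Uᴴ * U = 1 := Unitary.star_mul_self_of_mem hH.eigenvectorUnitary.2
    rw [conjTranspose_submatrix, ← submatrix_mul _ _ _ _ _ Function.bijective_id, hUU,
      submatrix_one_embedding]
  · ext i k
    have h := congrFun (congrFun hH.mul_eigenvectorUnitary i) (f k)
    rw [mul_diagonal] at h
    rw [mul_diagonal]
    exact h

theorem IsHermitian.exists_normalized_pos_eigenvectors (hH : H.IsHermitian)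
    (hdet : IsUnit H.det) (hswap : swapConjSwap H = -H) :
    ∃ (A : Matrix (n ⊕ n) n ℂ) (ν : n → ℝ), (∀ i, 0 < ν i) ∧
      H * A = A * (diagonal fun i => (ν i : ℂ)) ∧ Aᴴ * H * A = 1 ∧
      Aᴴ * A = diagonal fun i => ((ν i)⁻¹ : ℂ) := by
  obtain ⟨E, ν, hν, hEE, hHE⟩ := hH.exists_pos_eigenvectors hdet hswap
  set A := E * diagonal fun i => (((Real.sqrt (ν i))⁻¹ : ℝ) : ℂ)
  have hHA : H * A = A * diagonal fun i => (ν i : ℂ) := by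
    rw [← Matrix.mul_assoc, hHE, Matrix.mul_assoc, Matrix.mul_assoc, diagonal_mul_diagonal,
      diagonal_mul_diagonal]
    simp only [mul_comm]
  have hAA : Aᴴ * A = diagonal fun i => ((ν i)⁻¹ : ℂ) := by
    rw [conjTranspose_mul, Matrix.mul_assoc, ← Matrix.mul_assoc Eᴴ, hEE, Matrix.one_mul,
      diagonal_conjTranspose, diagonal_mul_diagonal]
    congr 1; ext i
    rw [Pi.star_apply, Complex.star_def, Complex.conj_ofReal, ← Complex.ofReal_mul, ← mul_inv,
      Real.mul_self_sqrt (hν i).le, Complex.ofReal_inv]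
  refine ⟨A, ν, hν, hHA, ?_, hAA⟩
  rw [Matrix.mul_assoc, hHA, ← Matrix.mul_assoc, hAA, diagonal_mul_diagonal, ← diagonal_one]
  congr 1; ext i
  exact inv_mul_cancel₀ (by exact_mod_cast (hν i).ne')

theorem IsHermitian.exists_normalForm (hH : H.IsHermitian) (hdet : IsUnit H.det)
    (hswap : swapConjSwap H = -H) :
    ∃ (P : Matrix (n ⊕ n) (n ⊕ n) ℂ) (μ : n → ℝ), (∀ i, 0 < μ i) ∧
      Pᴴ * H * P = Matrix.fromBlocks 1 0 0 (-1) ∧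
      Pᴴ * P =
        Matrix.fromBlocks (diagonal fun i => (μ i : ℂ)) 0 0 (diagonal fun i => (μ i : ℂ)) ∧
      swapConjSwap P = P := by
  obtain ⟨A, ν, hν, hHA, hAHA, hAA⟩ := hH.exists_normalized_pos_eigenvectors hdet hswap
  have hA_sA : Aᴴ * swapConj A = 0 := hH.conjTranspose_mul_swapConj_eq_zero hswap hν hHA
  have hsA_A : (swapConj A)ᴴ * A = 0 := by
    simpa using congrArg Matrix.conjTranspose hA_sA
  have hAH_sA : Aᴴ * H * swapConj A = 0 := by
    rw [Matrix.mul_assoc, mul_swapConj_eq_of_mul_eq hswap hHA, ← Matrix.mul_assoc, hA_sA,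
      Matrix.zero_mul]
  have hsAH_A : (swapConj A)ᴴ * H * A = 0 := by
    simpa [Matrix.mul_assoc, hH.eq] using congrArg Matrix.conjTranspose hAH_sA
  refine ⟨pairCols A, fun i => (ν i)⁻¹, fun i => inv_pos.mpr (hν i), ?_, ?_,
    swapConjSwap_pairCols A⟩
  · rw [conjTranspose_pairCols_mul_mul_pairCols, hswap, hAHA, hAH_sA, hsAH_A, Matrix.mul_neg,
      Matrix.neg_mul, hAHA, Matrix.map_neg _ (map_neg _),
      Matrix.map_one _ (map_zero _) (map_one _)]
  · have h := conjTranspose_pairCols_mul_mul_pairCols 1 A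
    simp only [Matrix.mul_one, swapConjSwap_one] at h
    rw [h, hAA, hA_sA, hsA_A]
    simp

end Spectral

end Matrix

theorem stmt_10_general {N : ℕ}
    (R Ω : Matrix (Fin N ⊕ Fin N) (Fin N ⊕ Fin N) ℂ)
    (hR : R.IsHermitian)
    (Γ Sig : Matrix (Fin N ⊕ Fin N) (Fin N ⊕ Fin N) ℂ)
    (hΓ : Γ = Matrix.fromBlocks 0 1 1 0)
    (hSig : Sig = Matrix.fromBlocks 1 0 0 (-1))
    (hRconj : Γ * R.map (starRingEnd ℂ) * Γ = -R)
    (hΩconj : Γ * Ω.map (starRingEnd ℂ) * Γ = Ω)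
    (hRunit : IsUnit R.det)
    (D : Matrix (Fin N ⊕ Fin N) (Fin N ⊕ Fin N) ℂ) (hD : D = R⁻¹ * Ω)
    (hΩpos : Ω.PosDef) :
    ∃ (T : Matrix (Fin N ⊕ Fin N) (Fin N ⊕ Fin N) ℂ) (μ : Fin N → ℝ),
      (∀ i, 0 < μ i) ∧
      Tᴴ * R * T = Sig ∧
      T = Γ * T.map (starRingEnd ℂ) * Γ ∧
      T⁻¹ * D * T
        = Matrix.diagonal (Sum.elim (fun i => (μ i : ℂ)) fun i => -(μ i : ℂ)) := by
  subst hΓ hSig hD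
  rw [fromBlocks_mul_map_mul_fromBlocks] at hRconj hΩconj
  obtain ⟨Q, hQ, hQdet, hQΩ, hQswap⟩ := hΩpos.exists_invSqrt_swapConjSwap_eq hΩconj
  have hH : (Q * R * Q).IsHermitian := by
    simpa [hQ.eq, Matrix.mul_assoc] using isHermitian_conjTranspose_mul_mul Q hR
  have hHdet : IsUnit (Q * R * Q).det := by
    rw [det_mul, det_mul]
    exact (hQdet.mul hRunit).mul hQdet
  have hHswap : swapConjSwap (Q * R * Q) = -(Q * R * Q) := by
    rw [swapConjSwap_mul, swapConjSwap_mul, hQswap, hRconj, Matrix.mul_neg, Matrix.neg_mul]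
  obtain ⟨P, μ, hμ, hPH, hPP, hPswap⟩ := hH.exists_normalForm hHdet hHswap
  have hTR : (Q * P)ᴴ * R * (Q * P) = fromBlocks 1 0 0 (-1) := by
    rw [← hPH, conjTranspose_mul, hQ.eq]
    simp only [Matrix.mul_assoc]
  have hTΩ : (Q * P)ᴴ * Ω * (Q * P) = Pᴴ * P := by
    calc (Q * P)ᴴ * Ω * (Q * P) = Pᴴ * (Q * Ω * Q) * P := by
          rw [conjTranspose_mul, hQ.eq]; simp only [Matrix.mul_assoc]
      _ = Pᴴ * P := by rw [hQΩ, Matrix.mul_one]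
  refine ⟨Q * P, μ, hμ, hTR, ?_, ?_⟩
  · rw [fromBlocks_mul_map_mul_fromBlocks, swapConjSwap_mul, hQswap, hPswap]
  · rw [inv_mul_mul_eq_of_conjTranspose_mul_mul_eq isUnit_det_fromBlocks_one_zero_zero_neg_one
      hTR hTΩ, hPP, inv_fromBlocks_one_zero_zero_neg_one, fromBlocks_multiply,
      ← fromBlocks_diagonal]
    simp

/-- if `Ω` is positive definite then a normal mode transformation exists. -/
theorem stmt_10 {N : ℕ} (hN : 0 < N)
    (R Ω : Matrix (Fin N ⊕ Fin N) (Fin N ⊕ Fin N) ℂ)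
    (hR : R.IsHermitian) (hΩ : Ω.IsHermitian)
    (Γ Sig : Matrix (Fin N ⊕ Fin N) (Fin N ⊕ Fin N) ℂ)
    (hΓ : Γ = Matrix.fromBlocks 0 1 1 0)
    (hSig : Sig = Matrix.fromBlocks 1 0 0 (-1))
    (hRconj : Γ * R.map (starRingEnd ℂ) * Γ = -R)
    (hΩconj : Γ * Ω.map (starRingEnd ℂ) * Γ = Ω)
    (hRunit : IsUnit R.det)
    (D : Matrix (Fin N ⊕ Fin N) (Fin N ⊕ Fin N) ℂ) (hD : D = R⁻¹ * Ω)
    (hΩpos : Ω.PosDef) :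
    ∃ (T : Matrix (Fin N ⊕ Fin N) (Fin N ⊕ Fin N) ℂ) (μ : Fin N → ℝ),
      (∀ i, 0 < μ i) ∧
      Tᴴ * R * T = Sig ∧
      T = Γ * T.map (starRingEnd ℂ) * Γ ∧
      T⁻¹ * D * T
        = Matrix.diagonal (Sum.elim (fun i => (μ i : ℂ)) fun i => -(μ i : ℂ)) :=
  stmt_10_general R Ω hR Γ Sig hΓ hSig hRconj hΩconj hRunit D hD hΩpos
end

section
/- Let v ∈ ℝ and let φ, ψ : ℝ × ℝ → ℂ be infinitely differentiable functions such that for every t: (a) both φ(t,·) and ψ(t,·) satisfy the wave equation (∂_t + v ∂_x)² φ = F̂²φ and (∂_t + v ∂_x)² ψ = F̂²ψ for 0 ≤ x ≤ L, where F̂ acts in the variable x and F̂² = F̂ ∘ F̂; and (b) the even-order x-derivatives of φ and ψ up to order 4M vanish at x = 0 and x = L. Define the inner product (φ, ψ)(t) = i ∫₀ᴸ [ ψ̄·(∂_t + v ∂_x)φ − φ·(∂_t + v ∂_x)ψ̄ ] dx, where the bar denotes complex conjugation. Then (φ, ψ)(t) is independent of t: d/dt (φ, ψ)(t) = 0 for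 all t. -/
/-- The Lorentz-violating differential operator acting on complex-valued functions:
`(F̂U)(x) = Σ_{i=1}^{M} c_i L⋆^(2i-2) U^(2i-1)(x)`. -/
noncomputable def FhatC (M : ℕ) (c : ℕ → ℝ) (Lstar : ℝ) (U : ℝ → ℂ) : ℝ → ℂ :=
  fun x => ∑ i ∈ Finset.range M,
    ((c (i + 1) * Lstar ^ (2 * i) : ℝ) : ℂ) * iteratedDeriv (2 * i + 1) U x

/-- The operator `∂_t + v ∂_x` acting on a function of two variables. -/
noncomputable def Dop (v : ℝ) (φ : ℝ → ℝ → ℂ) : ℝ → ℝ → ℂ :=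
  fun t x => deriv (fun s => φ s x) t + (v : ℂ) * deriv (fun y => φ t y) x

open Function Set MeasureTheory intervalIntegral Topology Filter ComplexConjugate

noncomputable def ptd (f : ℝ → ℝ → ℂ) : ℝ → ℝ → ℂ := fun t x => deriv (fun s => f s x) t
noncomputable def pxd (f : ℝ → ℝ → ℂ) : ℝ → ℝ → ℂ := fun t x => deriv (fun y => f t y) x

lemma hasDerivAt_fst {f : ℝ → ℝ → ℂ} (hf : ContDiff ℝ (⊤ : ℕ∞) (uncurry f)) (t x : ℝ) :
    HasDerivAt (fun s => f s x) (fderiv ℝ (uncurry f) (t, x) (1, 0)) t := by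
  have h1 : HasFDerivAt (uncurry f) (fderiv ℝ (uncurry f) (t, x)) (t, x) :=
    ((hf.differentiable (by simp)) (t, x)).hasFDerivAt
  have h2 : HasDerivAt (fun s : ℝ => (s, x)) ((1 : ℝ), (0 : ℝ)) t :=
    (hasDerivAt_id t).prodMk (hasDerivAt_const t x)
  exact h1.comp_hasDerivAt t h2

lemma hasDerivAt_snd {f : ℝ → ℝ → ℂ} (hf : ContDiff ℝ (⊤ : ℕ∞) (uncurry f)) (t x : ℝ) :
    HasDerivAt (fun y => f t y) (fderiv ℝ (uncurry f) (t, x) (0, 1)) x := by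
  have h1 : HasFDerivAt (uncurry f) (fderiv ℝ (uncurry f) (t, x)) (t, x) :=
    ((hf.differentiable (by simp)) (t, x)).hasFDerivAt
  have h2 : HasDerivAt (fun y : ℝ => (t, y)) ((0 : ℝ), (1 : ℝ)) x :=
    (hasDerivAt_const x t).prodMk (hasDerivAt_id x)
  exact h1.comp_hasDerivAt x h2

lemma ptd_eq {f : ℝ → ℝ → ℂ} (hf : ContDiff ℝ (⊤ : ℕ∞) (uncurry f)) (t x : ℝ) :
    ptd f t x = fderiv ℝ (uncurry f) (t, x) (1, 0) := (hasDerivAt_fst hf t x).deriv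

lemma pxd_eq {f : ℝ → ℝ → ℂ} (hf : ContDiff ℝ (⊤ : ℕ∞) (uncurry f)) (t x : ℝ) :
    pxd f t x = fderiv ℝ (uncurry f) (t, x) (0, 1) := (hasDerivAt_snd hf t x).deriv

lemma hasDerivAt_ptd {f : ℝ → ℝ → ℂ} (hf : ContDiff ℝ (⊤ : ℕ∞) (uncurry f)) (t x : ℝ) :
    HasDerivAt (fun s => f s x) (ptd f t x) t := by
  rw [ptd_eq hf]; exact hasDerivAt_fst hf t x

lemma hasDerivAt_pxd {f : ℝ → ℝ → ℂ} (hf : ContDiff ℝ (⊤ : ℕ∞) (uncurry f)) (t x : ℝ) :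
    HasDerivAt (fun y => f t y) (pxd f t x) x := by
  rw [pxd_eq hf]; exact hasDerivAt_snd hf t x

lemma contDiff_ptd {f : ℝ → ℝ → ℂ} (hf : ContDiff ℝ (⊤ : ℕ∞) (uncurry f)) :
    ContDiff ℝ (⊤ : ℕ∞) (uncurry (ptd f)) := by
  have h : uncurry (ptd f) = fun p : ℝ × ℝ => fderiv ℝ (uncurry f) p ((1 : ℝ), (0 : ℝ)) :=
    funext fun p => ptd_eq hf p.1 p.2
  rw [h]
  exact (hf.fderiv_right (by simp)).clm_apply contDiff_const

lemma contDiff_pxd {f : ℝ → ℝ → ℂ} (hf : ContDiff ℝ (⊤ : ℕ∞) (uncurry f)) :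
    ContDiff ℝ (⊤ : ℕ∞) (uncurry (pxd f)) := by
  have h : uncurry (pxd f) = fun p : ℝ × ℝ => fderiv ℝ (uncurry f) p ((0 : ℝ), (1 : ℝ)) :=
    funext fun p => pxd_eq hf p.1 p.2
  rw [h]
  exact (hf.fderiv_right (by simp)).clm_apply contDiff_const

lemma Dop_eq_ptd_pxd (v : ℝ) (f : ℝ → ℝ → ℂ) (t x : ℝ) :
    Dop v f t x = ptd f t x + (v : ℂ) * pxd f t x := rfl

lemma contDiff_Dop {f : ℝ → ℝ → ℂ} (v : ℝ) (hf : ContDiff ℝ (⊤ : ℕ∞) (uncurry f)) :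
    ContDiff ℝ (⊤ : ℕ∞) (uncurry (Dop v f)) := by
  have h : uncurry (Dop v f) =
      fun p : ℝ × ℝ => uncurry (ptd f) p + (v : ℂ) * uncurry (pxd f) p := rfl
  rw [h]
  exact (contDiff_ptd hf).add (contDiff_const.mul (contDiff_pxd hf))

lemma contDiff_slice_x {f : ℝ → ℝ → ℂ} (hf : ContDiff ℝ (⊤ : ℕ∞) (uncurry f)) (t : ℝ) :
    ContDiff ℝ (⊤ : ℕ∞) (f t) :=
  hf.comp (contDiff_const.prodMk contDiff_id)

lemma contDiff_slice_t {f : ℝ → ℝ → ℂ} (hf : ContDiff ℝ (⊤ : ℕ∞) (uncurry f)) (x : ℝ) :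
    ContDiff ℝ (⊤ : ℕ∞) (fun s => f s x) :=
  hf.comp (contDiff_id.prodMk contDiff_const)

lemma contDiff_conj2 {f : ℝ → ℝ → ℂ} (hf : ContDiff ℝ (⊤ : ℕ∞) (uncurry f)) :
    ContDiff ℝ (⊤ : ℕ∞) (uncurry (fun t x => (starRingEnd ℂ) (f t x))) := by
  have h : uncurry (fun t x => (starRingEnd ℂ) (f t x)) =
      (Complex.conjCLE : ℂ ≃L[ℝ] ℂ) ∘ uncurry f := rfl
  rw [h]
  exact (Complex.conjCLE : ℂ ≃L[ℝ] ℂ).contDiff.comp hf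

lemma deriv_conj (f : ℝ → ℂ) (x : ℝ) :
    deriv (fun y => (starRingEnd ℂ) (f y)) x = (starRingEnd ℂ) (deriv f x) := by
  simpa only [starRingEnd_apply] using deriv.star (f := f) (x := x)

lemma Dop_conj (v : ℝ) (ψ : ℝ → ℝ → ℂ) (t x : ℝ) :
    Dop v (fun r y => (starRingEnd ℂ) (ψ r y)) t x = (starRingEnd ℂ) (Dop v ψ t x) := by
  simp only [Dop, deriv_conj, map_add, map_mul, Complex.conj_ofReal]

lemma iteratedDeriv_conj (n : ℕ) (f : ℝ → ℂ) :
    iteratedDeriv n (fun y => (starRingEnd ℂ) (f y)) = fun x => (starRingEnd ℂ) (iteratedDeriv n f x) := by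
  induction n with
  | zero => simp [iteratedDeriv_zero]
  | succ n ih => funext x; rw [iteratedDeriv_succ, ih, iteratedDeriv_succ]; exact deriv_conj _ x

lemma iteratedDeriv_iteratedDeriv (m n : ℕ) (f : ℝ → ℂ) :
    iteratedDeriv m (iteratedDeriv n f) = iteratedDeriv (m + n) f := by
  induction m with
  | zero => simp
  | succ m ih => rw [iteratedDeriv_succ, ih, show m + 1 + n = m + n + 1 by ring, iteratedDeriv_succ]

lemma contDiff_iteratedDeriv (n : ℕ) {f : ℝ → ℂ} (hf : ContDiff ℝ (⊤ : ℕ∞) f) :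
    ContDiff ℝ ((⊤ : ℕ∞) : WithTop ℕ∞) (iteratedDeriv n f) := by
  rw [iteratedDeriv_eq_iterate]
  exact ContDiff.iterate_deriv n (hf.of_le (by simp))

lemma continuous_iteratedDeriv (n : ℕ) {f : ℝ → ℂ} (hf : ContDiff ℝ (⊤ : ℕ∞) f) :
    Continuous (iteratedDeriv n f) := (contDiff_iteratedDeriv n hf).continuous

lemma iteratedDeriv_fun_add' {n : ℕ} {f g : ℝ → ℂ} (hf : ContDiff ℝ (n : ℕ∞) f)
    (hg : ContDiff ℝ (n : ℕ∞) g) (x : ℝ) :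
    iteratedDeriv n (fun y => f y + g y) x = iteratedDeriv n f x + iteratedDeriv n g x := by
  simp only [← iteratedDerivWithin_univ]
  exact iteratedDerivWithin_add (Set.mem_univ x) uniqueDiffOn_univ (by exact_mod_cast hf.contDiffAt.contDiffWithinAt)
    (by exact_mod_cast hg.contDiffAt.contDiffWithinAt)

lemma iteratedDeriv_fun_const_mul {n : ℕ} {f : ℝ → ℂ} (hf : ContDiff ℝ (n : ℕ∞) f) (a : ℂ)
    (x : ℝ) :
    iteratedDeriv n (fun y => a * f y) x = a * iteratedDeriv n f x := by
  simp only [← iteratedDerivWithin_univ]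
  have := iteratedDerivWithin_const_smul (𝕜 := ℝ) (F := ℂ) (R := ℂ) (f := f) (n := n)
    (Set.mem_univ x) uniqueDiffOn_univ a (by exact_mod_cast hf.contDiffAt.contDiffWithinAt)
  simpa [smul_eq_mul] using this

lemma iteratedDeriv_fun_sum' {n : ℕ} {ι : Type*} (s : Finset ι) {f : ι → ℝ → ℂ}
    (hf : ∀ i ∈ s, ContDiff ℝ (n : ℕ∞) (f i)) (x : ℝ) :
    iteratedDeriv n (fun y => ∑ i ∈ s, f i y) x = ∑ i ∈ s, iteratedDeriv n (f i) x := by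
  classical
  induction s using Finset.induction with
  | empty =>
    simp only [Finset.sum_empty]
    rw [iteratedDeriv_eq_iterate]
    have : deriv^[n] (fun _ : ℝ => (0 : ℂ)) = fun _ => (0 : ℂ) := by
      induction n with
      | zero => rfl
      | succ n ih => rw [Function.iterate_succ_apply, show deriv (fun _ : ℝ => (0:ℂ)) = fun _ => (0:ℂ) from funext fun _ => deriv_const _ _, ih (by simp)]
    simp [this]
  | insert _ _ hnot ih =>
    rename_i a s
    simp only [Finset.sum_insert hnot]
    rw [iteratedDeriv_fun_add' (hf a (Finset.mem_insert_self a s))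
      (ContDiff.sum fun i hi => hf i (Finset.mem_insert_of_mem hi)),
      ih fun i hi => hf i (Finset.mem_insert_of_mem hi)]

lemma contDiff_FhatC (M : ℕ) (c : ℕ → ℝ) (Lstar : ℝ) {f : ℝ → ℂ} (hf : ContDiff ℝ (⊤ : ℕ∞) f) :
    ContDiff ℝ ((⊤ : ℕ∞) : WithTop ℕ∞) (FhatC M c Lstar f) := by
  have : FhatC M c Lstar f = fun x => ∑ i ∈ Finset.range M,
      ((c (i + 1) * Lstar ^ (2 * i) : ℝ) : ℂ) * iteratedDeriv (2 * i + 1) f x := rfl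
  rw [this]
  exact ContDiff.sum fun i _ => contDiff_const.mul (contDiff_iteratedDeriv _ hf)

lemma continuous_FhatC (M : ℕ) (c : ℕ → ℝ) (Lstar : ℝ) {f : ℝ → ℂ} (hf : ContDiff ℝ (⊤ : ℕ∞) f) :
    Continuous (FhatC M c Lstar f) := (contDiff_FhatC M c Lstar hf).continuous

lemma itD_FhatC (M : ℕ) (c : ℕ → ℝ) (Lstar : ℝ) (n : ℕ) {f : ℝ → ℂ}
    (hf : ContDiff ℝ (⊤ : ℕ∞) f) (x : ℝ) :
    iteratedDeriv n (FhatC M c Lstar f) x = ∑ i ∈ Finset.range M,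
      ((c (i + 1) * Lstar ^ (2 * i) : ℝ) : ℂ) * iteratedDeriv (n + (2 * i + 1)) f x := by
  have h1 : FhatC M c Lstar f = fun y => ∑ i ∈ Finset.range M,
      ((c (i + 1) * Lstar ^ (2 * i) : ℝ) : ℂ) * iteratedDeriv (2 * i + 1) f y := rfl
  rw [h1, iteratedDeriv_fun_sum' (Finset.range M)
    (fun i _ => contDiff_const.mul ((contDiff_iteratedDeriv _ hf).of_le (by exact_mod_cast le_top)))]
  refine Finset.sum_congr rfl fun i _ => ?_
  rw [iteratedDeriv_fun_const_mul ((contDiff_iteratedDeriv _ hf).of_le (by exact_mod_cast le_top)),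
    iteratedDeriv_iteratedDeriv]

lemma FhatC_FhatC (M : ℕ) (c : ℕ → ℝ) (Lstar : ℝ) {f : ℝ → ℂ} (hf : ContDiff ℝ (⊤ : ℕ∞) f) (x : ℝ) :
    FhatC M c Lstar (FhatC M c Lstar f) x = ∑ j ∈ Finset.range M, ∑ i ∈ Finset.range M,
      ((c (j + 1) * Lstar ^ (2 * j) : ℝ) : ℂ) * (((c (i + 1) * Lstar ^ (2 * i) : ℝ) : ℂ) *
        iteratedDeriv ((2 * j + 1) + (2 * i + 1)) f x) := by
  have h1 : FhatC M c Lstar (FhatC M c Lstar f) x = ∑ j ∈ Finset.range M,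
      ((c (j + 1) * Lstar ^ (2 * j) : ℝ) : ℂ) *
        iteratedDeriv (2 * j + 1) (FhatC M c Lstar f) x := rfl
  rw [h1]
  refine Finset.sum_congr rfl fun j _ => ?_
  rw [itD_FhatC M c Lstar _ hf, Finset.mul_sum]

lemma FhatC_conj (M : ℕ) (c : ℕ → ℝ) (Lstar : ℝ) (f : ℝ → ℂ) (x : ℝ) :
    FhatC M c Lstar (fun y => (starRingEnd ℂ) (f y)) x = (starRingEnd ℂ) (FhatC M c Lstar f x) := by
  simp only [FhatC, iteratedDeriv_conj, map_sum, map_mul, Complex.conj_ofReal]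

lemma contDiff_deriv' {g : ℝ → ℂ} (hg : ContDiff ℝ ((⊤ : ℕ∞) : WithTop ℕ∞) g) :
    ContDiff ℝ ((⊤ : ℕ∞) : WithTop ℕ∞) (deriv g) := (contDiff_infty_iff_deriv.mp hg).2

lemma hasDerivAt_of_smooth' {g : ℝ → ℂ} (hg : ContDiff ℝ ((⊤ : ℕ∞) : WithTop ℕ∞) g) (x : ℝ) :
    HasDerivAt g (deriv g x) x :=
  ((hg.differentiable (by simp)) x).hasDerivAt

lemma contDiff_iteratedDeriv' (n : ℕ) {f : ℝ → ℂ} (hf : ContDiff ℝ ((⊤ : ℕ∞) : WithTop ℕ∞) f) :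
    ContDiff ℝ ((⊤ : ℕ∞) : WithTop ℕ∞) (iteratedDeriv n f) := by
  rw [iteratedDeriv_eq_iterate]
  exact ContDiff.iterate_deriv n hf

lemma ibp2 (L : ℝ) {a b : ℝ → ℂ} (ha : ContDiff ℝ ((⊤ : ℕ∞) : WithTop ℕ∞) a)
    (hb : ContDiff ℝ ((⊤ : ℕ∞) : WithTop ℕ∞) b)
    (ha0 : a 0 = 0) (haL : a L = 0) (hb0 : b 0 = 0) (hbL : b L = 0) :
    ∫ x in (0:ℝ)..L, a x * deriv (deriv b) x = ∫ x in (0:ℝ)..L, deriv (deriv a) x * b x := by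
  have ha' := ha
  have hb' := hb
  have hda := contDiff_deriv' ha'
  have hdb := contDiff_deriv' hb'
  have h1 : ∫ x in (0:ℝ)..L, a x * deriv (deriv b) x
      = a L * deriv b L - a 0 * deriv b 0 - ∫ x in (0:ℝ)..L, deriv a x * deriv b x :=
    intervalIntegral.integral_mul_deriv_eq_deriv_mul
      (fun x _ => hasDerivAt_of_smooth' ha' x) (fun x _ => hasDerivAt_of_smooth' hdb x)
      (hda.continuous.intervalIntegrable 0 L)
      ((contDiff_deriv' hdb).continuous.intervalIntegrable 0 L)
  have h2 : ∫ x in (0:ℝ)..L, b x * deriv (deriv a) x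
      = b L * deriv a L - b 0 * deriv a 0 - ∫ x in (0:ℝ)..L, deriv b x * deriv a x :=
    intervalIntegral.integral_mul_deriv_eq_deriv_mul
      (fun x _ => hasDerivAt_of_smooth' hb' x) (fun x _ => hasDerivAt_of_smooth' hda x)
      (hdb.continuous.intervalIntegrable 0 L)
      ((contDiff_deriv' hda).continuous.intervalIntegrable 0 L)
  have e1 : (∫ x in (0:ℝ)..L, deriv (deriv a) x * b x)
      = ∫ x in (0:ℝ)..L, b x * deriv (deriv a) x :=
    intervalIntegral.integral_congr fun x _ => mul_comm _ _
  have e2 : (∫ x in (0:ℝ)..L, deriv b x * deriv a x)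
      = ∫ x in (0:ℝ)..L, deriv a x * deriv b x :=
    intervalIntegral.integral_congr fun x _ => mul_comm _ _
  rw [h1, e1, h2, e2, ha0, haL, hb0, hbL]
  ring

lemma ibp_even (MM : ℕ) (L : ℝ) {f g : ℝ → ℂ} (hf : ContDiff ℝ (⊤ : ℕ∞) f) (hg : ContDiff ℝ (⊤ : ℕ∞) g)
    (hfb : ∀ j : ℕ, 2 * j ≤ 4 * MM → iteratedDeriv (2 * j) f 0 = 0 ∧ iteratedDeriv (2 * j) f L = 0)
    (hgb : ∀ j : ℕ, 2 * j ≤ 4 * MM → iteratedDeriv (2 * j) g 0 = 0 ∧ iteratedDeriv (2 * j) g L = 0)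
    (k : ℕ) (hk : 2 * k ≤ 4 * MM) :
    ∫ x in (0:ℝ)..L, f x * iteratedDeriv (2 * k) g x
      = ∫ x in (0:ℝ)..L, iteratedDeriv (2 * k) f x * g x := by
  have main : ∀ j m : ℕ, m + j = k →
      (∫ x in (0:ℝ)..L, iteratedDeriv (2 * m) f x * iteratedDeriv (2 * j) g x)
        = ∫ x in (0:ℝ)..L, iteratedDeriv (2 * k) f x * g x := by
    intro j
    induction j with
    | zero =>
      intro m hm
      simp only [Nat.add_zero] at hm
      subst hm
      simp [iteratedDeriv_zero]
    | succ j ih =>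
      intro m hm
      have hddg : iteratedDeriv (2 * (j + 1)) g = deriv (deriv (iteratedDeriv (2 * j) g)) := by
        rw [show 2 * (j + 1) = 2 * j + 1 + 1 by ring, iteratedDeriv_succ, iteratedDeriv_succ]
      have hddf : iteratedDeriv (2 * (m + 1)) f = deriv (deriv (iteratedDeriv (2 * m) f)) := by
        rw [show 2 * (m + 1) = 2 * m + 1 + 1 by ring, iteratedDeriv_succ, iteratedDeriv_succ]
      have hm' : 2 * m ≤ 4 * MM := by omega
      have hj' : 2 * j ≤ 4 * MM := by omega
      have haC := contDiff_iteratedDeriv' (2 * m) (hf.of_le (by simp))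
      have hbC := contDiff_iteratedDeriv' (2 * j) (hg.of_le (by simp))
      rw [hddg, ibp2 L haC hbC (hfb m hm').1 (hfb m hm').2 (hgb j hj').1 (hgb j hj').2, ← hddf]
      exact ih (m + 1) (by omega)
  have h0 := main k 0 (by omega)
  simpa [iteratedDeriv_zero] using h0

lemma contDiff_FhatC' (M : ℕ) (c : ℕ → ℝ) (Lstar : ℝ) {f : ℝ → ℂ}
    (hf : ContDiff ℝ ((⊤ : ℕ∞) : WithTop ℕ∞) f) :
    ContDiff ℝ ((⊤ : ℕ∞) : WithTop ℕ∞) (FhatC M c Lstar f) := by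
  have h : FhatC M c Lstar f = fun x => ∑ i ∈ Finset.range M,
      ((c (i + 1) * Lstar ^ (2 * i) : ℝ) : ℂ) * iteratedDeriv (2 * i + 1) f x := rfl
  rw [h]
  exact ContDiff.sum fun i _ => contDiff_const.mul (contDiff_iteratedDeriv' _ hf)

lemma key_sym (M : ℕ) (c : ℕ → ℝ) (Lstar L : ℝ) {f g : ℝ → ℂ}
    (hf : ContDiff ℝ (⊤ : ℕ∞) f) (hg : ContDiff ℝ (⊤ : ℕ∞) g)
    (hfb : ∀ j : ℕ, 2 * j ≤ 4 * M → iteratedDeriv (2 * j) f 0 = 0 ∧ iteratedDeriv (2 * j) f L = 0)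
    (hgb : ∀ j : ℕ, 2 * j ≤ 4 * M → iteratedDeriv (2 * j) g 0 = 0 ∧ iteratedDeriv (2 * j) g L = 0) :
    (∫ x in (0:ℝ)..L, (g x * FhatC M c Lstar (FhatC M c Lstar f) x
      - f x * FhatC M c Lstar (FhatC M c Lstar g) x)) = 0 := by
  set a : ℕ → ℂ := fun i => ((c (i + 1) * Lstar ^ (2 * i) : ℝ) : ℂ) with ha
  have hW : ∀ x : ℝ, g x * FhatC M c Lstar (FhatC M c Lstar f) x
      - f x * FhatC M c Lstar (FhatC M c Lstar g) x
      = ∑ j ∈ Finset.range M, ∑ i ∈ Finset.range M, (a j * a i) *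
          (g x * iteratedDeriv ((2 * j + 1) + (2 * i + 1)) f x
            - f x * iteratedDeriv ((2 * j + 1) + (2 * i + 1)) g x) := by
    intro x
    rw [FhatC_FhatC M c Lstar hf x, FhatC_FhatC M c Lstar hg x, Finset.mul_sum, Finset.mul_sum,
      ← Finset.sum_sub_distrib]
    refine Finset.sum_congr rfl fun j _ => ?_
    rw [Finset.mul_sum, Finset.mul_sum, ← Finset.sum_sub_distrib]
    refine Finset.sum_congr rfl fun i _ => ?_
    ring
  rw [intervalIntegral.integral_congr (g := fun x => ∑ j ∈ Finset.range M, ∑ i ∈ Finset.range M,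
    (a j * a i) * (g x * iteratedDeriv ((2 * j + 1) + (2 * i + 1)) f x
      - f x * iteratedDeriv ((2 * j + 1) + (2 * i + 1)) g x)) (fun x _ => hW x)]
  have hcont : ∀ n : ℕ, Continuous (fun x => g x * iteratedDeriv n f x - f x * iteratedDeriv n g x) :=
    fun n => (hg.continuous.mul (continuous_iteratedDeriv n hf)).sub
      (hf.continuous.mul (continuous_iteratedDeriv n hg))
  rw [intervalIntegral.integral_finset_sum (μ := MeasureTheory.volume) (a := (0:ℝ)) (b := L)
    (f := fun j x => ∑ i ∈ Finset.range M, (a j * a i) *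
      (g x * iteratedDeriv ((2 * j + 1) + (2 * i + 1)) f x
        - f x * iteratedDeriv ((2 * j + 1) + (2 * i + 1)) g x))
    (fun j _ => ((continuous_finset_sum _ (fun i _ => continuous_const.mul (hcont _))).intervalIntegrable 0 L))]
  refine Finset.sum_eq_zero fun j hj => ?_
  rw [intervalIntegral.integral_finset_sum (fun i _ => (continuous_const.fun_mul (hcont _)).intervalIntegrable 0 L)]
  refine Finset.sum_eq_zero fun i hi => ?_
  rw [intervalIntegral.integral_const_mul]
  have hk : (2 * j + 1) + (2 * i + 1) = 2 * (j + i + 1) := by ring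
  have hle : 2 * (j + i + 1) ≤ 4 * M := by
    have := Finset.mem_range.mp hj; have := Finset.mem_range.mp hi; omega
  have hsub : (∫ x in (0:ℝ)..L, (g x * iteratedDeriv ((2 * j + 1) + (2 * i + 1)) f x
      - f x * iteratedDeriv ((2 * j + 1) + (2 * i + 1)) g x))
      = (∫ x in (0:ℝ)..L, g x * iteratedDeriv ((2 * j + 1) + (2 * i + 1)) f x)
        - ∫ x in (0:ℝ)..L, f x * iteratedDeriv ((2 * j + 1) + (2 * i + 1)) g x :=
    intervalIntegral.integral_sub
      ((hg.continuous.mul (continuous_iteratedDeriv _ hf)).intervalIntegrable 0 L)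
      ((hf.continuous.mul (continuous_iteratedDeriv _ hg)).intervalIntegrable 0 L)
  rw [hsub, hk, ibp_even M L hg hf hgb hfb _ hle,
    intervalIntegral.integral_congr (g := fun x => f x * iteratedDeriv (2 * (j + i + 1)) g x)
      (fun x _ => mul_comm _ _)]
  simp

/-- for solutions of the wave equation `(∂_t + v∂_x)²φ = F̂²φ` satisfying the
boundary conditions, the inner product
`(φ,ψ)(t) = i ∫₀ᴸ [ψ̄·(∂_t+v∂_x)φ - φ·(∂_t+v∂_x)ψ̄] dx` is conserved: its `t`-derivative
vanishes. -/
theorem stmt_16 (M : ℕ) (hM : 1 ≤ M) (c : ℕ → ℝ) (Lstar L : ℝ)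
    (hLstar : 0 < Lstar) (hL : 0 < L) (v : ℝ)
    (φ ψ : ℝ → ℝ → ℂ)
    (hφ : ContDiff ℝ (⊤ : ℕ∞) (Function.uncurry φ))
    (hψ : ContDiff ℝ (⊤ : ℕ∞) (Function.uncurry ψ))
    (hφwave : ∀ t x : ℝ, 0 ≤ x → x ≤ L →
      Dop v (Dop v φ) t x = FhatC M c Lstar (FhatC M c Lstar (φ t)) x)
    (hψwave : ∀ t x : ℝ, 0 ≤ x → x ≤ L →
      Dop v (Dop v ψ) t x = FhatC M c Lstar (FhatC M c Lstar (ψ t)) x)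
    (hφbc : ∀ t : ℝ, ∀ j : ℕ, 2 * j ≤ 4 * M →
      iteratedDeriv (2 * j) (φ t) 0 = 0 ∧ iteratedDeriv (2 * j) (φ t) L = 0)
    (hψbc : ∀ t : ℝ, ∀ j : ℕ, 2 * j ≤ 4 * M →
      iteratedDeriv (2 * j) (ψ t) 0 = 0 ∧ iteratedDeriv (2 * j) (ψ t) L = 0) :
    ∀ t : ℝ,
      deriv (fun s : ℝ => Complex.I * ∫ x in (0:ℝ)..L,
        (starRingEnd ℂ (ψ s x)) * Dop v φ s x
          - φ s x * Dop v (fun r y => starRingEnd ℂ (ψ r y)) s x) t = 0 := by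
  intro t
  set Ψ : ℝ → ℝ → ℂ := fun r y => starRingEnd ℂ (ψ r y) with hΨdef
  have hΨ : ContDiff ℝ (⊤ : ℕ∞) (uncurry Ψ) := contDiff_conj2 hψ
  set G : ℝ → ℝ → ℂ :=
    fun s x => (starRingEnd ℂ (ψ s x)) * Dop v φ s x - φ s x * Dop v Ψ s x with hGdef
  have hDφ := contDiff_Dop v hφ
  have hDΨ := contDiff_Dop v hΨ
  have hG : ContDiff ℝ (⊤ : ℕ∞) (uncurry G) := by
    have h : uncurry G = fun p : ℝ × ℝ => uncurry Ψ p * uncurry (Dop v φ) p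
        - uncurry φ p * uncurry (Dop v Ψ) p := rfl
    rw [h]
    exact (hΨ.mul hDφ).sub (hφ.mul hDΨ)
  -- differentiation under the integral sign
  obtain ⟨C, hC⟩ := (((isCompact_Icc (a := t - 1) (b := t + 1)).prod
      (isCompact_uIcc (a := (0:ℝ)) (b := L))).exists_bound_of_continuousOn
        (contDiff_ptd hG).continuous.continuousOn)
  have hmain : HasDerivAt (fun s => ∫ x in (0:ℝ)..L, G s x)
      (∫ x in (0:ℝ)..L, ptd G t x) t := by
    refine (intervalIntegral.hasDerivAt_integral_of_dominated_loc_of_deriv_le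
      (F := G) (F' := ptd G) (bound := fun _ => C) (Metric.ball_mem_nhds t one_pos)
      (Filter.Eventually.of_forall fun s =>
        ((contDiff_slice_x hG s).continuous.aestronglyMeasurable))
      ((contDiff_slice_x hG t).continuous.intervalIntegrable 0 L)
      ((contDiff_slice_x (contDiff_ptd hG) t).continuous.aestronglyMeasurable)
      (MeasureTheory.ae_of_all _ fun x hx s hs => ?_)
      (intervalIntegrable_const)
      (MeasureTheory.ae_of_all _ fun x _ s _ => hasDerivAt_ptd hG s x)).2
    have hs' : s ∈ Set.Icc (t - 1) (t + 1) := by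
      have h1 := Metric.mem_ball.mp hs
      rw [Real.dist_eq] at h1
      have h2 := abs_lt.mp h1
      constructor <;> [linarith [h2.1]; linarith [h2.2]]
    exact hC (s, x) ⟨hs', Set.uIoc_subset_uIcc hx⟩
  rw [(hmain.const_mul Complex.I).deriv]
  -- it remains to show the integral of the t-derivative vanishes
  suffices hzero : (∫ x in (0:ℝ)..L, ptd G t x) = 0 by rw [hzero, mul_zero]
  -- pointwise identity: ∂ₜG = ψ̄·D²φ - φ·D²Ψ - v·∂ₓG
  have hpt : ∀ x : ℝ, ptd G t x =
      Ψ t x * Dop v (Dop v φ) t x - φ t x * Dop v (Dop v Ψ) t x - (v : ℂ) * pxd G t x := by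
    intro x
    have h1 : HasDerivAt (fun s => G s x)
        (ptd Ψ t x * Dop v φ t x + Ψ t x * ptd (Dop v φ) t x -
          (ptd φ t x * Dop v Ψ t x + φ t x * ptd (Dop v Ψ) t x)) t :=
      ((hasDerivAt_ptd hΨ t x).mul (hasDerivAt_ptd hDφ t x)).sub
        ((hasDerivAt_ptd hφ t x).mul (hasDerivAt_ptd hDΨ t x))
    have h2 : HasDerivAt (fun y => G t y)
        (pxd Ψ t x * Dop v φ t x + Ψ t x * pxd (Dop v φ) t x -
          (pxd φ t x * Dop v Ψ t x + φ t x * pxd (Dop v Ψ) t x)) x :=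
      ((hasDerivAt_pxd hΨ t x).mul (hasDerivAt_pxd hDφ t x)).sub
        ((hasDerivAt_pxd hφ t x).mul (hasDerivAt_pxd hDΨ t x))
    have e1 : ptd G t x = ptd Ψ t x * Dop v φ t x + Ψ t x * ptd (Dop v φ) t x -
        (ptd φ t x * Dop v Ψ t x + φ t x * ptd (Dop v Ψ) t x) := h1.deriv
    have e2 : pxd G t x = pxd Ψ t x * Dop v φ t x + Ψ t x * pxd (Dop v φ) t x -
        (pxd φ t x * Dop v Ψ t x + φ t x * pxd (Dop v Ψ) t x) := h2.deriv
    rw [e1, e2, Dop_eq_ptd_pxd v (Dop v φ), Dop_eq_ptd_pxd v (Dop v Ψ),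
      Dop_eq_ptd_pxd v φ, Dop_eq_ptd_pxd v Ψ]
    ring
  -- conjugation identities
  have hDDΨ : ∀ s y : ℝ, Dop v (Dop v Ψ) s y = starRingEnd ℂ (Dop v (Dop v ψ) s y) := by
    intro s y
    have h1 : Dop v Ψ = fun r z => starRingEnd ℂ (Dop v ψ r z) :=
      funext fun r => funext fun z => Dop_conj v ψ r z
    rw [h1]
    exact Dop_conj v (Dop v ψ) s y
  have hΨt : Ψ t = fun y => starRingEnd ℂ (ψ t y) := rfl
  have hconj2 : ∀ x : ℝ, FhatC M c Lstar (FhatC M c Lstar (Ψ t)) x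
      = starRingEnd ℂ (FhatC M c Lstar (FhatC M c Lstar (ψ t)) x) := by
    intro x
    have h1 : FhatC M c Lstar (Ψ t) = fun y => starRingEnd ℂ (FhatC M c Lstar (ψ t) y) := by
      rw [hΨt]; exact funext fun y => FhatC_conj M c Lstar (ψ t) y
    rw [h1]
    exact FhatC_conj M c Lstar (FhatC M c Lstar (ψ t)) x
  -- the integrand on [0, L]
  set W : ℝ → ℂ := fun x => Ψ t x * FhatC M c Lstar (FhatC M c Lstar (φ t)) x
      - φ t x * FhatC M c Lstar (FhatC M c Lstar (Ψ t)) x with hWdef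
  have hEq : ∀ x ∈ Set.uIcc (0:ℝ) L, ptd G t x = W x - (v : ℂ) * pxd G t x := by
    intro x hx
    rw [Set.uIcc_of_le hL.le] at hx
    rw [hpt x, hφwave t x hx.1 hx.2, hDDΨ t x, hψwave t x hx.1 hx.2, ← hconj2 x]
  rw [intervalIntegral.integral_congr hEq]
  -- split the integral
  have hWcont : Continuous W := by
    have hF2φ : Continuous (FhatC M c Lstar (FhatC M c Lstar (φ t))) :=
      (contDiff_FhatC' M c Lstar (contDiff_FhatC' M c Lstar
        ((contDiff_slice_x hφ t).of_le (by simp)))).continuous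
    have hF2Ψ : Continuous (FhatC M c Lstar (FhatC M c Lstar (Ψ t))) :=
      (contDiff_FhatC' M c Lstar (contDiff_FhatC' M c Lstar
        ((contDiff_slice_x hΨ t).of_le (by simp)))).continuous
    exact ((contDiff_slice_x hΨ t).continuous.mul hF2φ).sub
      ((contDiff_slice_x hφ t).continuous.mul hF2Ψ)
  have hpxdcont : Continuous (fun x => pxd G t x) := (contDiff_slice_x (contDiff_pxd hG) t).continuous
  rw [intervalIntegral.integral_sub (hWcont.intervalIntegrable 0 L)
    ((continuous_const.fun_mul hpxdcont).intervalIntegrable 0 L), intervalIntegral.integral_const_mul]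
  -- the boundary term vanishes
  have hψ0 : ψ t 0 = 0 := by simpa using (hψbc t 0 (by omega)).1
  have hψL : ψ t L = 0 := by simpa using (hψbc t 0 (by omega)).2
  have hφ0 : φ t 0 = 0 := by simpa using (hφbc t 0 (by omega)).1
  have hφL : φ t L = 0 := by simpa using (hφbc t 0 (by omega)).2
  have hGt0 : G t 0 = 0 := by
    show starRingEnd ℂ (ψ t 0) * Dop v φ t 0 - φ t 0 * Dop v Ψ t 0 = 0
    rw [hψ0, hφ0]; simp
  have hGtL : G t L = 0 := by
    show starRingEnd ℂ (ψ t L) * Dop v φ t L - φ t L * Dop v Ψ t L = 0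
    rw [hψL, hφL]; simp
  have hbdry : (∫ x in (0:ℝ)..L, pxd G t x) = 0 := by
    have hrw : (fun x => pxd G t x) = deriv (fun y => G t y) := rfl
    rw [hrw, intervalIntegral.integral_deriv_eq_sub
      (fun x _ => (hasDerivAt_pxd hG t x).differentiableAt)
      (by rw [← hrw]; exact hpxdcont.intervalIntegrable 0 L), hGtL, hGt0, sub_zero]
  -- the main term vanishes by repeated integration by parts
  have hWzero : (∫ x in (0:ℝ)..L, W x) = 0 := by
    have hgb : ∀ j : ℕ, 2 * j ≤ 4 * M →
        iteratedDeriv (2 * j) (Ψ t) 0 = 0 ∧ iteratedDeriv (2 * j) (Ψ t) L = 0 := by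
      intro j hj
      rw [hΨt, iteratedDeriv_conj]
      exact ⟨by simp [(hψbc t j hj).1], by simp [(hψbc t j hj).2]⟩
    exact key_sym M c Lstar L (contDiff_slice_x hφ t) (contDiff_slice_x hΨ t) (hφbc t) hgb
  rw [hWzero, hbdry, mul_zero, sub_zero]
end
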